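/- arXiv:1708.03591 — 4 statements merged into one kernel-verified Lean document; each statement's English description precedes it below -/
import Mathlib

section
/- Let G be a weighted directed graph on vertex set {1,…,N} with Laplacian L. Then every eigenvalue of L has strictly positive real part except for a simple zero eigenvalue whose corresponding (right) eigenvector is (1,1,…,1)^T, if and only if G has a rooted-out branch. -/
/-- The Laplacian of the weighted directed graph on `Fin N` with weights `a`:
`L i i = ∑_{k ≠ i} a i k` and `L i j = - a i j` for `i ≠ j`. -/
def graphLaplacian {N : ℕ} (a : Fin N → Fin N → ℝ) : Matrix (Fin N) (Fin N) ℝ :=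
  Matrix.of fun i j => if i = j then ∑ k ∈ Finset.univ.erase i, a i k else -(a i j)

/-- `G` has a rooted-out branch: some vertex has a directed path to every other vertex.
Information flows from `j` to `i` along an edge when `a i j > 0` (i.e. `j` is a neighbor
of `i`), so the step relation from `u` to `v` holds when `a v u > 0`. -/
def hasRootedOutBranch {N : ℕ} (a : Fin N → Fin N → ℝ) : Prop :=
  ∃ r : Fin N, ∀ v : Fin N, Relation.ReflTransGen (fun u v => 0 < a v u) r v

/-!
Gershgorin: the disc of row `k` has centre and radius `dₖ = ∑_{j ≠ k} a k j ≥ 0`, so it meets the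
closed left half-plane only at `0`. The multiplicity of the eigenvalue `0` is the dimension of the
generalized kernel of `L`.

If `r` is a root, a maximum principle applies: at a maximum of `x` with `L x = 0` the value of `x`
propagates to every neighbor, hence back along a path from `r`, so `ker L` is the line of
constants; evaluating `L x` at a maximum and at a minimum of `x` shows that no constant `c ≠ 0` is
of the form `L x`, so the generalized kernel is that line too.

If there is no root, take `w₁` with the fewest ancestors and `w₂` not reachable from `w₁`. Their
ancestor sets are disjoint and closed under taking neighbors. On such a set `S` the matrix `L` is
block triangular, with a diagonal block of zero row sums, so `L` has a nonzero left null vector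
supported on `S`. This gives `dim ker Lᵀ ≥ 2`, and `Lᵀ` has the characteristic polynomial of `L`.
-/

open Matrix Polynomial Finset

theorem Module.End.ker_le_maxGenEigenspace_zero {R M : Type*} [CommRing R] [AddCommGroup M]
    [Module R M] (f : Module.End R M) : LinearMap.ker f ≤ f.maxGenEigenspace 0 :=
  f.eigenspace_zero.symm.le.trans eigenspace_le_maxGenEigenspace

theorem Module.End.maxGenEigenspace_zero_eq_ker {R M : Type*} [CommRing R] [AddCommGroup M]
    [Module R M] (f : Module.End R M) (h : ∀ x, f (f x) = 0 → f x = 0) :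
    f.maxGenEigenspace 0 = LinearMap.ker f := by
  have hpow : ∀ k x, (f ^ (k + 1)) x = 0 → f x = 0 := by
    intro k
    induction k with
    | zero => simp
    | succ k ih =>
      exact fun x hx => h x (ih (f x) (by rwa [pow_succ, Module.End.mul_apply] at hx))
  refine le_antisymm (fun x hx => ?_) f.ker_le_maxGenEigenspace_zero
  obtain ⟨k, hk⟩ := (f.mem_maxGenEigenspace 0 x).mp hx
  rw [zero_smul, sub_zero] at hk
  rcases k with _ | k
  · simp_all
  · exact hpow k x hk

theorem Matrix.rootMultiplicity_zero_charpoly_eq_finrank {K n : Type*} [Field K] [Fintype n]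
    [DecidableEq n] (A : Matrix n n K) :
    A.charpoly.rootMultiplicity 0 =
      Module.finrank K (Module.End.maxGenEigenspace (toLin' A) 0) := by
  rw [LinearMap.finrank_maxGenEigenspace_zero_eq, Matrix.charpoly_toLin',
    rootMultiplicity_eq_natTrailingDegree']

theorem Matrix.rootMultiplicity_zero_charpoly_map_ofReal {n : Type*} [Fintype n]
    [DecidableEq n] (A : Matrix n n ℝ) :
    (A.map Complex.ofReal).charpoly.rootMultiplicity 0 = A.charpoly.rootMultiplicity 0 := by
  rw [show A.map Complex.ofReal = A.map Complex.ofRealHom from rfl, Matrix.charpoly_map,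
    ← map_zero Complex.ofRealHom, ← eq_rootMultiplicity_map Complex.ofReal_injective]

theorem Matrix.exists_vecMul_eq_zero_of_isIdempotentElem {K n : Type*} [Field K] [Fintype n]
    [DecidableEq n] {L P : Matrix n n K} (hP : IsIdempotentElem P) (hPL : P * L * P = P * L)
    {v : n → K} (hLv : L *ᵥ v = 0) (hPv : P *ᵥ v ≠ 0) :
    ∃ w ≠ 0, w ᵥ* P = w ∧ w ᵥ* L = 0 := by
  set M := P * L * P + (1 - P)
  have hMP : M * P = P * L * P := by
    simp only [M, add_mul, sub_mul, one_mul, mul_assoc, hP.eq, sub_self, add_zero]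
  have hM : M *ᵥ (P *ᵥ v) = 0 := by
    rw [mulVec_mulVec, hMP, hPL, ← mulVec_mulVec, hLv, mulVec_zero]
  obtain ⟨w, hw, hwM⟩ :=
    exists_vecMul_eq_zero_iff.mpr (exists_mulVec_eq_zero_iff.mp ⟨_, hPv, hM⟩)
  have hM1P : M * (1 - P) = 1 - P := by
    simp only [M, mul_sub, add_mul, sub_mul, mul_one, one_mul, mul_assoc, hP.eq]
    abel
  have hwP : w ᵥ* P = w := by
    have := congrArg (· ᵥ* (1 - P)) hwM
    rw [vecMul_vecMul, hM1P, zero_vecMul, vecMul_sub, vecMul_one, sub_eq_zero] at this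
    exact this.symm
  refine ⟨w, hw, hwP, ?_⟩
  calc w ᵥ* L = w ᵥ* (P * L * P) := by rw [hPL, ← vecMul_vecMul, hwP]
    _ = w ᵥ* M - w ᵥ* (1 - P) := by simp only [M, vecMul_add]; abel
    _ = 0 := by rw [hwM, vecMul_sub, vecMul_one, hwP, sub_self, sub_self]

theorem two_le_finrank_of_disjoint_support {K ι : Type*} [Field K] [Fintype ι]
    (V : Submodule K (ι → K)) {w₁ w₂ : ι → K} (h₁ : w₁ ∈ V) (h₂ : w₂ ∈ V) (hw₁ : w₁ ≠ 0)
    (hw₂ : w₂ ≠ 0) (hdisj : ∀ i, w₁ i = 0 ∨ w₂ i = 0) : 2 ≤ Module.finrank K V := by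
  have hind : LinearIndependent K ![w₁, w₂] := by
    rw [LinearIndependent.pair_iff]
    intro s t hst
    have hcoord : ∀ i, s * w₁ i + t * w₂ i = 0 := fun i => by simpa using congrFun hst i
    obtain ⟨i₁, hi₁⟩ := Function.ne_iff.mp hw₁
    obtain ⟨i₂, hi₂⟩ := Function.ne_iff.mp hw₂
    refine ⟨?_, ?_⟩
    · rcases hdisj i₁ with h | h
      · exact absurd h hi₁
      · exact (mul_eq_zero.mp (by simpa [h] using hcoord i₁)).resolve_right hi₁
    · rcases hdisj i₂ with h | h
      · exact (mul_eq_zero.mp (by simpa [h] using hcoord i₂)).resolve_right hi₂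
      · exact absurd h hi₂
  have hspan : Submodule.span K (Set.range ![w₁, w₂]) ≤ V := by
    rw [Submodule.span_le, Set.range_subset_iff]
    intro i
    fin_cases i <;> assumption
  simpa [finrank_span_eq_card hind] using Submodule.finrank_mono hspan

theorem Complex.re_pos_of_norm_sub_ofReal_le {μ : ℂ} {d : ℝ} (h : ‖μ - d‖ ≤ d) (hμ : μ ≠ 0) :
    0 < μ.re := by
  have hd : 0 ≤ d := (norm_nonneg _).trans h
  have hsq : (μ.re - d) ^ 2 + μ.im ^ 2 ≤ d ^ 2 := by
    have := pow_le_pow_left₀ (norm_nonneg _) h 2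
    rwa [← Complex.normSq_eq_norm_sq, Complex.normSq_apply, Complex.sub_re, Complex.sub_im,
      Complex.ofReal_re, Complex.ofReal_im, sub_zero, ← sq, ← sq] at this
  have hpos : 0 < μ.re ^ 2 + μ.im ^ 2 := by
    simpa [Complex.normSq_apply, ← sq] using Complex.normSq_pos.mpr hμ
  nlinarith

def NeighborClosed {N : ℕ} (a : Fin N → Fin N → ℝ) (S : Finset (Fin N)) : Prop :=
  ∀ v ∈ S, ∀ u, 0 < a v u → u ∈ S

section GraphLaplacian

variable {N : ℕ} {a : Fin N → Fin N → ℝ}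

theorem graphLaplacian_mulVec_apply (a : Fin N → Fin N → ℝ) (x : Fin N → ℝ) (v : Fin N) :
    (graphLaplacian a *ᵥ x) v = ∑ j ∈ univ.erase v, a v j * (x v - x j) := by
  simp only [mulVec, dotProduct, graphLaplacian, of_apply]
  rw [← add_sum_erase _ _ (mem_univ v), if_pos rfl, sum_mul, ← sum_add_distrib]
  refine sum_congr rfl fun j hj => ?_
  rw [if_neg (ne_of_mem_erase hj).symm]
  ring

theorem graphLaplacian_mulVec_one (a : Fin N → Fin N → ℝ) :
    graphLaplacian a *ᵥ (fun _ => 1) = 0 := by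
  funext v
  simp [graphLaplacian_mulVec_apply]

theorem graphLaplacian_mulVec_nonneg_of_forall_le (ha : ∀ i j, 0 ≤ a i j) {x : Fin N → ℝ}
    {m : Fin N} (hm : ∀ j, x j ≤ x m) : 0 ≤ (graphLaplacian a *ᵥ x) m := by
  rw [graphLaplacian_mulVec_apply]
  exact sum_nonneg fun j _ => mul_nonneg (ha m j) (sub_nonneg.mpr (hm j))

theorem eq_of_graphLaplacian_mulVec_eq_zero_of_forall_le (ha : ∀ i j, 0 ≤ a i j)
    {x : Fin N → ℝ} {m : Fin N} (hm : ∀ j, x j ≤ x m) (hx : (graphLaplacian a *ᵥ x) m = 0)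
    {u : Fin N} (hu : 0 < a m u) : x u = x m := by
  obtain rfl | hum := eq_or_ne u m
  · rfl
  rw [graphLaplacian_mulVec_apply, sum_eq_zero_iff_of_nonneg fun j _ =>
    mul_nonneg (ha m j) (sub_nonneg.mpr (hm j))] at hx
  have := hx u (mem_erase.mpr ⟨hum, mem_univ u⟩)
  linarith [(mul_eq_zero.mp this).resolve_left hu.ne']

theorem eq_zero_of_graphLaplacian_mulVec_eq_const [Nonempty (Fin N)] (ha : ∀ i j, 0 ≤ a i j)
    {x : Fin N → ℝ} {c : ℝ} (hx : graphLaplacian a *ᵥ x = fun _ => c) : c = 0 := by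
  obtain ⟨m, hm⟩ := Finite.exists_max x
  obtain ⟨m', hm'⟩ := Finite.exists_min x
  have hmax := graphLaplacian_mulVec_nonneg_of_forall_le ha hm
  have hmin := graphLaplacian_mulVec_nonneg_of_forall_le ha (x := -x) (m := m')
    (fun j => neg_le_neg (hm' j))
  rw [hx] at hmax
  rw [mulVec_neg, hx] at hmin
  simp only [Pi.neg_apply, neg_nonneg] at hmin
  linarith

theorem le_root_of_graphLaplacian_mulVec_eq_zero (ha : ∀ i j, 0 ≤ a i j) {r : Fin N}
    (hr : ∀ v, Relation.ReflTransGen (fun u v => 0 < a v u) r v) {x : Fin N → ℝ}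
    (hx : graphLaplacian a *ᵥ x = 0) (v : Fin N) : x v ≤ x r := by
  have : Nonempty (Fin N) := ⟨r⟩
  obtain ⟨m, hm⟩ := Finite.exists_max x
  suffices ∀ u, Relation.ReflTransGen (fun u v => 0 < a v u) u m → x u = x m from
    this r (hr m) ▸ hm v
  intro u hu
  induction hu using Relation.ReflTransGen.head_induction_on with
  | refl => rfl
  | head hstep _ ih =>
    rw [← ih] at hm ⊢
    exact eq_of_graphLaplacian_mulVec_eq_zero_of_forall_le ha hm (congrFun hx _) hstep

theorem eq_root_of_graphLaplacian_mulVec_eq_zero (ha : ∀ i j, 0 ≤ a i j) {r : Fin N}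
    (hr : ∀ v, Relation.ReflTransGen (fun u v => 0 < a v u) r v) {x : Fin N → ℝ}
    (hx : graphLaplacian a *ᵥ x = 0) (v : Fin N) : x v = x r := by
  have hneg := le_root_of_graphLaplacian_mulVec_eq_zero ha hr (x := -x)
    (by rw [mulVec_neg, hx, neg_zero]) v
  exact le_antisymm (le_root_of_graphLaplacian_mulVec_eq_zero ha hr hx v) (neg_le_neg_iff.mp hneg)

theorem re_pos_of_isRoot_charpoly_graphLaplacian (ha : ∀ i j, 0 ≤ a i j) {μ : ℂ}
    (hμ : ((graphLaplacian a).map Complex.ofReal).charpoly.IsRoot μ) (hμ0 : μ ≠ 0) :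
    0 < μ.re := by
  rw [← Matrix.charpoly_toLin', ← Module.End.hasEigenvalue_iff_isRoot_charpoly] at hμ
  obtain ⟨k, hk⟩ := eigenvalue_mem_ball hμ
  have hrad : ∑ j ∈ univ.erase k, ‖(graphLaplacian a).map Complex.ofReal k j‖
      = ∑ j ∈ univ.erase k, a k j :=
    sum_congr rfl fun j hj => by
      simp [graphLaplacian, (ne_of_mem_erase hj).symm, abs_of_nonneg (ha k j)]
  rw [hrad, Metric.mem_closedBall, dist_eq_norm] at hk
  refine Complex.re_pos_of_norm_sub_ofReal_le (d := ∑ j ∈ univ.erase k, a k j) ?_ hμ0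
  simpa [graphLaplacian] using hk

theorem finrank_maxGenEigenspace_graphLaplacian_of_hasRootedOutBranch (ha : ∀ i j, 0 ≤ a i j)
    (h : hasRootedOutBranch a) :
    Module.finrank ℝ (Module.End.maxGenEigenspace (toLin' (graphLaplacian a)) 0) = 1 := by
  obtain ⟨r, hr⟩ := h
  have : Nonempty (Fin N) := ⟨r⟩
  have hker : LinearMap.ker (toLin' (graphLaplacian a)) = Submodule.span ℝ {fun _ => 1} := by
    ext x
    rw [LinearMap.mem_ker, toLin'_apply, Submodule.mem_span_singleton]
    constructor
    · intro hx
      exact ⟨x r, funext fun v => by simp [eq_root_of_graphLaplacian_mulVec_eq_zero ha hr hx v]⟩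
    · rintro ⟨c, rfl⟩
      rw [mulVec_smul, graphLaplacian_mulVec_one, smul_zero]
  rw [Module.End.maxGenEigenspace_zero_eq_ker, hker, finrank_span_singleton]
  · exact Function.ne_iff.mpr ⟨r, one_ne_zero⟩
  · intro x hx
    have hmem : toLin' (graphLaplacian a) x ∈ Submodule.span ℝ {fun _ => 1} := hker ▸ hx
    obtain ⟨c, hc⟩ := Submodule.mem_span_singleton.mp hmem
    have hc0 : c = 0 := eq_zero_of_graphLaplacian_mulVec_eq_const ha (x := x) (by
      rw [← toLin'_apply, ← hc]
      funext
      simp)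
    rw [← hc, hc0, zero_smul]

theorem rootMultiplicity_eq_one_of_hasRootedOutBranch (ha : ∀ i j, 0 ≤ a i j)
    (h : hasRootedOutBranch a) :
    ((graphLaplacian a).map Complex.ofReal).charpoly.rootMultiplicity 0 = 1 := by
  rw [rootMultiplicity_zero_charpoly_map_ofReal, rootMultiplicity_zero_charpoly_eq_finrank]
  exact finrank_maxGenEigenspace_graphLaplacian_of_hasRootedOutBranch ha h

theorem exists_disjoint_neighborClosed_of_not_hasRootedOutBranch [Nonempty (Fin N)]
    (h : ¬ hasRootedOutBranch a) :
    ∃ S₁ S₂ : Finset (Fin N), S₁.Nonempty ∧ S₂.Nonempty ∧ Disjoint S₁ S₂ ∧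
      NeighborClosed a S₁ ∧ NeighborClosed a S₂ := by
  classical
  let R := Relation.ReflTransGen (fun u v : Fin N => 0 < a v u)
  let A : Fin N → Finset (Fin N) := fun w => univ.filter (R · w)
  have hmem : ∀ u w, u ∈ A w ↔ R u w := fun u w => by simp [A]
  have hclosed : ∀ w, NeighborClosed a (A w) := fun w v hv u hu =>
    (hmem u w).mpr (((hmem v w).mp hv).head hu)
  obtain ⟨w₁, -, hmin⟩ := exists_min_image univ (fun w => (A w).card) univ_nonempty
  obtain ⟨w₂, hw₂⟩ : ∃ w₂, ¬ R w₁ w₂ := not_forall.mp (not_exists.mp h w₁)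
  refine ⟨A w₁, A w₂, ⟨w₁, (hmem _ _).mpr .refl⟩, ⟨w₂, (hmem _ _).mpr .refl⟩,
    disjoint_left.mpr fun u hu₁ hu₂ => hw₂ ?_, hclosed w₁, hclosed w₂⟩
  have hsub : A u ⊆ A w₁ := fun v hv =>
    (hmem v w₁).mpr (((hmem v u).mp hv).trans ((hmem u w₁).mp hu₁))
  have heq : A u = A w₁ := eq_of_subset_of_card_le hsub (hmin u (mem_univ u))
  exact ((hmem w₁ u).mp (heq ▸ (hmem _ _).mpr .refl)).trans ((hmem u w₂).mp hu₂)

theorem exists_vecMul_graphLaplacian_eq_zero (ha : ∀ i j, 0 ≤ a i j) {S : Finset (Fin N)}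
    (hS : NeighborClosed a S) (hne : S.Nonempty) :
    ∃ w ≠ 0, (∀ i ∉ S, w i = 0) ∧ w ᵥ* graphLaplacian a = 0 := by
  set P : Matrix (Fin N) (Fin N) ℝ := diagonal fun i => if i ∈ S then 1 else 0
  have hP : IsIdempotentElem P := by
    rw [IsIdempotentElem, diagonal_mul_diagonal]
    congr 1
    funext i
    split_ifs <;> simp
  have hPL : P * graphLaplacian a * P = P * graphLaplacian a := by
    ext i j
    simp only [P, diagonal_mul, mul_diagonal]
    by_cases hi : i ∈ S
    · by_cases hj : j ∈ S
      · simp [hi, hj]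
      · have hij : i ≠ j := fun h => hj (h ▸ hi)
        have haij : a i j = 0 :=
          (ha i j).eq_or_lt.elim Eq.symm fun h => absurd (hS i hi j h) hj
        simp [hi, hj, graphLaplacian, hij, haij]
    · simp [hi]
  obtain ⟨i, hi⟩ := hne
  obtain ⟨w, hw, hwP, hwL⟩ := exists_vecMul_eq_zero_of_isIdempotentElem hP hPL
    (graphLaplacian_mulVec_one a) (Function.ne_iff.mpr ⟨i, by simp [P, mulVec_diagonal, hi]⟩)
  refine ⟨w, hw, fun j hj => ?_, hwL⟩
  simpa [P, vecMul_diagonal, hj] using (congrFun hwP j).symm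

theorem two_le_rootMultiplicity_of_not_hasRootedOutBranch [Nonempty (Fin N)]
    (ha : ∀ i j, 0 ≤ a i j) (h : ¬ hasRootedOutBranch a) :
    2 ≤ ((graphLaplacian a).map Complex.ofReal).charpoly.rootMultiplicity 0 := by
  obtain ⟨S₁, S₂, hne₁, hne₂, hdisj, hS₁, hS₂⟩ :=
    exists_disjoint_neighborClosed_of_not_hasRootedOutBranch h
  obtain ⟨w₁, hw₁, hsupp₁, hL₁⟩ := exists_vecMul_graphLaplacian_eq_zero ha hS₁ hne₁
  obtain ⟨w₂, hw₂, hsupp₂, hL₂⟩ := exists_vecMul_graphLaplacian_eq_zero ha hS₂ hne₂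
  rw [rootMultiplicity_zero_charpoly_map_ofReal, ← charpoly_transpose,
    rootMultiplicity_zero_charpoly_eq_finrank]
  refine le_trans ?_ (Submodule.finrank_mono (Module.End.ker_le_maxGenEigenspace_zero _))
  refine two_le_finrank_of_disjoint_support _ ?_ ?_ hw₁ hw₂ fun i => ?_
  · rwa [LinearMap.mem_ker, toLin'_apply, mulVec_transpose]
  · rwa [LinearMap.mem_ker, toLin'_apply, mulVec_transpose]
  · by_cases hi : i ∈ S₁
    · exact .inr (hsupp₂ i (disjoint_left.mp hdisj hi))
    · exact .inl (hsupp₁ i hi)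

end GraphLaplacian

/-- every eigenvalue of the Laplacian `L` has strictly positive real part except
for a simple zero eigenvalue with corresponding eigenvector `(1,…,1)ᵀ`, if and only if the
graph has a rooted-out branch. -/
theorem laplacian_spectrum_iff_rootedOutBranch
    (N : ℕ) (a : Fin N → Fin N → ℝ) (ha : ∀ i j, 0 ≤ a i j)
    (L : Matrix (Fin N) (Fin N) ℝ) (hL : L = graphLaplacian a) :
    ((∀ μ : ℂ, (L.map (Complex.ofReal)).charpoly.IsRoot μ → μ = 0 ∨ 0 < μ.re) ∧
      (L.map (Complex.ofReal)).charpoly.rootMultiplicity 0 = 1 ∧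
      L.mulVec (fun _ => 1) = 0)
    ↔ hasRootedOutBranch a := by
  subst hL
  refine ⟨fun ⟨_, hmult, _⟩ => ?_, fun h => ⟨fun μ hμ => ?_,
    rootMultiplicity_eq_one_of_hasRootedOutBranch ha h, graphLaplacian_mulVec_one a⟩⟩
  · by_contra h
    have : Nonempty (Fin N) := Fin.pos_iff_nonempty.mp <| Nat.pos_of_ne_zero fun hN => by
      subst hN
      simp [rootMultiplicity_eq_zero] at hmult
    have := two_le_rootMultiplicity_of_not_hasRootedOutBranch ha h
    omega
  · exact or_iff_not_imp_left.mpr (re_pos_of_isRoot_charpoly_graphLaplacian ha hμ)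
end

section
/- Let G be a weighted directed graph on vertex set {1,…,N} with Laplacian L, and consider the consensus dynamics ẋ(t) = −(L ⊗ I_n) x(t) on ℝ^{nN}, whose solution is x(t) = exp(−t(L ⊗ I_n)) x(0). Then the following are equivalent: (i) G has a rooted-out branch; (ii) there exist constants η > 0 and λ > 0 such that for every initial condition x(0) ∈ ℝ^{nN} there exists a point x^∞ in the consensus set E = {x ∈ ℝ^{nN} : x_1 = x_2 = ⋯ = x_N, x_i ∈ ℝ^n} with ‖x(t) − x^∞‖ ≤ η e^{−λ t} ‖x(0) − x^∞‖ for all t ≥ 0. -/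
open scoped Kronecker
open NormedSpace Nat Finset

set_option linter.unusedSectionVars false
set_option linter.unusedVariables false
set_option maxHeartbeats 1600000

attribute [local instance] Matrix.linftyOpNormedAddCommGroup Matrix.linftyOpNormedRing
  Matrix.linftyOpNormedAlgebra

/-- The Euclidean norm on `ℝ^m`. -/
noncomputable def enorm' {m : Type*} [Fintype m] (v : m → ℝ) : ℝ :=
  Real.sqrt (∑ i, v i ^ 2)





section EntryLemmas

variable {N : ℕ}

/-- entry evaluation as a linear map -/
def entryLM (i j : Fin N) : Matrix (Fin N) (Fin N) ℝ →ₗ[ℝ] ℝ where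
  toFun A := A i j
  map_add' _ _ := rfl
  map_smul' _ _ := rfl

lemma exp_entry_eq (M : Matrix (Fin N) (Fin N) ℝ) (i j : Fin N) :
    (exp M) i j = ∑' k : ℕ, ((k ! : ℝ))⁻¹ • (M ^ k) i j := by
  have hsum : Summable fun k : ℕ => ((k ! : ℝ))⁻¹ • M ^ k := expSeries_summable' M
  have := ((entryLM i j).toContinuousLinearMap).map_tsum hsum
  rw [exp_eq_tsum ℝ]
  exact this

lemma exp_entry_summable (M : Matrix (Fin N) (Fin N) ℝ) (i j : Fin N) :
    Summable fun k : ℕ => ((k ! : ℝ))⁻¹ • (M ^ k) i j := by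
  have hsum : Summable fun k : ℕ => ((k ! : ℝ))⁻¹ • M ^ k := expSeries_summable' M
  have := ((entryLM i j).toContinuousLinearMap).summable
    (f := fun k : ℕ => ((k ! : ℝ))⁻¹ • M ^ k) hsum
  exact this

/-- powers of an entrywise-nonnegative matrix are entrywise nonnegative -/
lemma pow_entry_nonneg {M : Matrix (Fin N) (Fin N) ℝ} (hM : ∀ i j, 0 ≤ M i j) (k : ℕ) :
    ∀ i j, 0 ≤ (M ^ k) i j := by
  induction k with
  | zero => intro i j; by_cases h : i = j <;> simp [Matrix.one_apply, h]
  | succ k ih =>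
    intro i j
    rw [pow_succ, Matrix.mul_apply]
    exact Finset.sum_nonneg fun u _ => mul_nonneg (ih i u) (hM u j)

lemma exp_entry_ge_term {M : Matrix (Fin N) (Fin N) ℝ} (hM : ∀ i j, 0 ≤ M i j) (k : ℕ)
    (i j : Fin N) : ((k ! : ℝ))⁻¹ • (M ^ k) i j ≤ (exp M) i j := by
  rw [exp_entry_eq]
  exact Summable.le_tsum (exp_entry_summable M i j) k fun m _ =>
    smul_nonneg (by positivity) (pow_entry_nonneg hM m i j)

lemma exp_entry_nonneg {M : Matrix (Fin N) (Fin N) ℝ} (hM : ∀ i j, 0 ≤ M i j) (i j : Fin N) :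
    0 ≤ (exp M) i j := by
  have := exp_entry_ge_term hM 0 i j
  refine le_trans ?_ this
  simpa using pow_entry_nonneg hM 0 i j

/-- mulVec as a linear map -/
def mulVecLM (v : Fin N → ℝ) : Matrix (Fin N) (Fin N) ℝ →ₗ[ℝ] (Fin N → ℝ) where
  toFun A := A.mulVec v
  map_add' A B := Matrix.add_mulVec A B v
  map_smul' c A := Matrix.smul_mulVec c A v

/-- if `M.mulVec v = 0` then `exp M` fixes `v`. -/
lemma exp_mulVec_fixed {M : Matrix (Fin N) (Fin N) ℝ} {v : Fin N → ℝ}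
    (hv : M.mulVec v = 0) : (exp M).mulVec v = v := by
  have hsum : Summable fun k : ℕ => ((k ! : ℝ))⁻¹ • M ^ k := expSeries_summable' M
  have h1 := ((mulVecLM v).toContinuousLinearMap).map_tsum hsum
  have hpow : ∀ k : ℕ, (M ^ k).mulVec v = if k = 0 then v else 0 := by
    intro k
    induction k with
    | zero => simp [Matrix.one_mulVec]
    | succ k ih =>
      rw [pow_succ, ← Matrix.mulVec_mulVec, hv, Matrix.mulVec_zero]
      simp
  rw [exp_eq_tsum ℝ]
  have : ∀ k : ℕ, (mulVecLM v).toContinuousLinearMap (((k ! : ℝ))⁻¹ • M ^ k)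
      = if k = 0 then v else 0 := by
    intro k
    simp only [LinearMap.coe_toContinuousLinearMap', map_smul]
    have : (mulVecLM v) (M ^ k) = if k = 0 then v else 0 := hpow k
    rw [this]
    by_cases h : k = 0 <;> simp [h]
  calc (mulVecLM v) (∑' k : ℕ, ((k ! : ℝ))⁻¹ • M ^ k)
      = ∑' k : ℕ, (mulVecLM v).toContinuousLinearMap (((k ! : ℝ))⁻¹ • M ^ k) := h1
    _ = ∑' k : ℕ, (if k = 0 then v else 0) := by simp_rw [this]
    _ = v := tsum_ite_eq (0 : ℕ) (fun _ => v)

end EntryLemmas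





section Kron

variable {N n : ℕ}

/-- `A ↦ A ⊗ₖ 1` as a ring hom -/
def kronRingHom (N n : ℕ) :
    Matrix (Fin N) (Fin N) ℝ →+* Matrix (Fin N × Fin n) (Fin N × Fin n) ℝ where
  toFun A := A ⊗ₖ (1 : Matrix (Fin n) (Fin n) ℝ)
  map_one' := Matrix.one_kronecker_one
  map_mul' A B := by rw [← Matrix.mul_kronecker_mul, one_mul]
  map_zero' := Matrix.zero_kronecker _
  map_add' A B := Matrix.add_kronecker A B _

lemma kronRingHom_linear (c : ℝ) (A : Matrix (Fin N) (Fin N) ℝ) :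
    kronRingHom N n (c • A) = c • kronRingHom N n A := Matrix.smul_kronecker c A _

/-- `A ↦ A ⊗ₖ 1` as a linear map -/
def kronLM (N n : ℕ) :
    Matrix (Fin N) (Fin N) ℝ →ₗ[ℝ] Matrix (Fin N × Fin n) (Fin N × Fin n) ℝ where
  toFun A := A ⊗ₖ (1 : Matrix (Fin n) (Fin n) ℝ)
  map_add' A B := Matrix.add_kronecker A B _
  map_smul' c A := Matrix.smul_kronecker c A _

lemma kron_continuous : Continuous (kronRingHom N n) := by
  have : Continuous (kronLM N n) := (kronLM N n).continuous_of_finiteDimensional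
  exact this

lemma exp_kron (A : Matrix (Fin N) (Fin N) ℝ) :
    exp (A ⊗ₖ (1 : Matrix (Fin n) (Fin n) ℝ))
      = (exp A) ⊗ₖ (1 : Matrix (Fin n) (Fin n) ℝ) :=
  (map_exp (kronRingHom N n) kron_continuous A).symm

lemma kron_mulVec (A : Matrix (Fin N) (Fin N) ℝ) (x : Fin N × Fin n → ℝ) (i : Fin N) (k : Fin n) :
    (A ⊗ₖ (1 : Matrix (Fin n) (Fin n) ℝ)).mulVec x (i, k)
      = ∑ j, A i j * x (j, k) := by
  rw [Matrix.mulVec]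
  show ∑ p : Fin N × Fin n, (A ⊗ₖ (1 : Matrix (Fin n) (Fin n) ℝ)) (i,k) p * x p = _
  rw [Fintype.sum_prod_type]
  have : ∀ j l, (A ⊗ₖ (1 : Matrix (Fin n) (Fin n) ℝ)) (i,k) (j,l)
      = A i j * (if k = l then 1 else 0) := by
    intro j l
    simp [Matrix.kroneckerMap_apply, Matrix.one_apply]
  simp_rw [this]
  congr 1
  ext j
  simp [Finset.mul_sum, mul_ite]

/-- scalar exponential: `exp (d • 1) = e^d • 1` -/
lemma exp_smul_one (d : ℝ) :
    exp (d • (1 : Matrix (Fin N) (Fin N) ℝ)) = Real.exp d • 1 := by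
  have h1 : d • (1 : Matrix (Fin N) (Fin N) ℝ) = algebraMap ℝ _ d :=
    (Algebra.algebraMap_eq_smul_one d).symm
  erw [h1, ← algebraMap_exp_comm (𝕂 := ℝ), ← Real.exp_eq_exp_ℝ, Algebra.algebraMap_eq_smul_one]

end Kron



section Stoch

variable {N : ℕ} (he : (Finset.univ : Finset (Fin N)).Nonempty)

variable {P : Matrix (Fin N) (Fin N) ℝ}

lemma stoch_mulVec_le (hP : ∀ i j, 0 ≤ P i j) (hrow : ∀ i, ∑ j, P i j = 1)
    (x : Fin N → ℝ) (i : Fin N) :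
    P.mulVec x i ≤ Finset.univ.sup' he x := by
  calc P.mulVec x i = ∑ j, P i j * x j := rfl
    _ ≤ ∑ j, P i j * Finset.univ.sup' he x := by
        refine Finset.sum_le_sum fun j _ => mul_le_mul_of_nonneg_left ?_ (hP i j)
        exact Finset.le_sup' x (mem_univ j)
    _ = Finset.univ.sup' he x := by rw [← Finset.sum_mul, hrow, one_mul]

lemma stoch_mulVec_ge (hP : ∀ i j, 0 ≤ P i j) (hrow : ∀ i, ∑ j, P i j = 1)
    (x : Fin N → ℝ) (i : Fin N) :
    Finset.univ.inf' he x ≤ P.mulVec x i := by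
  calc Finset.univ.inf' he x
      = ∑ j, P i j * Finset.univ.inf' he x := by rw [← Finset.sum_mul, hrow, one_mul]
    _ ≤ ∑ j, P i j * x j := by
        refine Finset.sum_le_sum fun j _ => mul_le_mul_of_nonneg_left ?_ (hP i j)
        exact Finset.inf'_le x (mem_univ j)
    _ = P.mulVec x i := rfl

lemma inf'_le_sup' (x : Fin N → ℝ) :
    Finset.univ.inf' he x ≤ Finset.univ.sup' he x := by
  obtain ⟨i, hi⟩ := he
  exact le_trans (Finset.inf'_le x hi) (Finset.le_sup' x hi)

lemma stoch_contraction {δ : ℝ} (hδ0 : 0 ≤ δ) {r : Fin N}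
    (hP : ∀ i j, 0 ≤ P i j) (hrow : ∀ i, ∑ j, P i j = 1) (hcol : ∀ i, δ ≤ P i r)
    (x : Fin N → ℝ) :
    Finset.univ.sup' he (P.mulVec x) - Finset.univ.inf' he (P.mulVec x)
      ≤ (1 - δ) * (Finset.univ.sup' he x - Finset.univ.inf' he x) := by
  set Q : Matrix (Fin N) (Fin N) ℝ := fun i j => P i j - if j = r then δ else 0 with hQ
  have hQ0 : ∀ i j, 0 ≤ Q i j := by
    intro i j
    by_cases h : j = r
    · subst h; simpa [hQ, sub_nonneg] using hcol i
    · simpa [hQ, h] using hP i j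
  have hQrow : ∀ i, ∑ j, Q i j = 1 - δ := by
    intro i
    simp only [hQ]
    rw [Finset.sum_sub_distrib, hrow, Finset.sum_ite_eq' Finset.univ r fun _ => δ]
    simp
  have hsplit : ∀ i, P.mulVec x i = δ * x r + ∑ j, Q i j * x j := by
    intro i
    have : ∀ j, Q i j * x j = P i j * x j - (if j = r then δ * x j else 0) := by
      intro j
      by_cases h : j = r <;> simp [hQ, h, sub_mul]
    simp only [this, Finset.sum_sub_distrib, Finset.sum_ite_eq' Finset.univ r fun j => δ * x j]
    simp only [Matrix.mulVec, dotProduct, Finset.mem_univ, if_true]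
    ring
  have hub : ∀ i, P.mulVec x i ≤ δ * x r + (1 - δ) * Finset.univ.sup' he x := by
    intro i
    rw [hsplit i]
    refine add_le_add_right ?_ _
    calc ∑ j, Q i j * x j ≤ ∑ j, Q i j * Finset.univ.sup' he x :=
          Finset.sum_le_sum fun j _ => mul_le_mul_of_nonneg_left (Finset.le_sup' x (mem_univ j)) (hQ0 i j)
      _ = (1 - δ) * Finset.univ.sup' he x := by rw [← Finset.sum_mul, hQrow]
  have hlb : ∀ i, δ * x r + (1 - δ) * Finset.univ.inf' he x ≤ P.mulVec x i := by
    intro i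
    rw [hsplit i]
    refine add_le_add_right ?_ _
    calc (1 - δ) * Finset.univ.inf' he x = ∑ j, Q i j * Finset.univ.inf' he x := by
          rw [← Finset.sum_mul, hQrow]
      _ ≤ ∑ j, Q i j * x j :=
          Finset.sum_le_sum fun j _ => mul_le_mul_of_nonneg_left (Finset.inf'_le x (mem_univ j)) (hQ0 i j)
  have h1 : Finset.univ.sup' he (P.mulVec x) ≤ δ * x r + (1 - δ) * Finset.univ.sup' he x :=
    Finset.sup'_le he _ fun i _ => hub i
  have h2 : δ * x r + (1 - δ) * Finset.univ.inf' he x ≤ Finset.univ.inf' he (P.mulVec x) :=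
    Finset.le_inf' he _ fun i _ => hlb i
  have := sub_le_sub h1 h2
  linarith [this]

end Stoch





section Lap

variable {N : ℕ} (a : Fin N → Fin N → ℝ)

lemma lap_mulVec_one : (graphLaplacian a).mulVec 1 = 0 := by
  funext i
  simp only [Matrix.mulVec, dotProduct, Pi.one_apply, mul_one]
  rw [← Finset.add_sum_erase Finset.univ _ (Finset.mem_univ i)]
  have h1 : graphLaplacian a i i = ∑ k ∈ Finset.univ.erase i, a i k := by
    simp [graphLaplacian]
  have h2 : ∑ j ∈ Finset.univ.erase i, graphLaplacian a i j
      = -∑ j ∈ Finset.univ.erase i, a i j := by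
    rw [← Finset.sum_neg_distrib]
    refine Finset.sum_congr rfl fun j hj => ?_
    have : j ≠ i := Finset.ne_of_mem_erase hj
    simp [graphLaplacian, this.symm, Ne.symm this]
  rw [h1, h2]
  simp

lemma lap_entry_diag (i : Fin N) :
    graphLaplacian a i i = ∑ k ∈ Finset.univ.erase i, a i k := by simp [graphLaplacian]

lemma lap_entry_off {i j : Fin N} (h : i ≠ j) : graphLaplacian a i j = -(a i j) := by
  simp [graphLaplacian, h]

/-- zero-block invariance for powers -/
lemma pow_block_zero {M : Matrix (Fin N) (Fin N) ℝ} {S : Set (Fin N)}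
    (hM : ∀ i ∈ S, ∀ j ∉ S, M i j = 0) (k : ℕ) :
    ∀ i ∈ S, ∀ j ∉ S, (M ^ k) i j = 0 := by
  induction k with
  | zero =>
    intro i hi j hj
    have : i ≠ j := fun h => hj (h ▸ hi)
    simp [Matrix.one_apply, this]
  | succ k ih =>
    intro i hi j hj
    rw [pow_succ, Matrix.mul_apply]
    refine Finset.sum_eq_zero fun u _ => ?_
    by_cases hu : u ∈ S
    · rw [hM u hu j hj, mul_zero]
    · rw [ih i hi u hu, zero_mul]

end Lap



section Graph

variable {N : ℕ} (a : Fin N → Fin N → ℝ)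

/-- ancestors of i -/
def anc (i : Fin N) : Set (Fin N) := {u | Relation.ReflTransGen (fun u v => 0 < a v u) u i}

lemma anc_self (i : Fin N) : i ∈ anc a i := Relation.ReflTransGen.refl

lemma anc_closed {i : Fin N} {w j : Fin N} (hw : w ∈ anc a i) (hj : j ∉ anc a i)
    (ha : ∀ i j, 0 ≤ a i j) : a w j = 0 := by
  by_contra h
  have hpos : 0 < a w j := lt_of_le_of_ne (ha w j) (Ne.symm h)
  exact hj (Relation.ReflTransGen.head hpos hw)

lemma exists_disjoint_anc (hN : 0 < N) (h : ¬ hasRootedOutBranch a) :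
    ∃ i j : Fin N, anc a i ∩ anc a j = ∅ := by
  by_contra hcon
  push_neg at hcon
  apply h
  -- all pairwise intersections nonempty; find a root
  have hne : ∀ i j : Fin N, (anc a i ∩ anc a j).Nonempty := hcon
  obtain ⟨u, _, hu⟩ := Finset.exists_min_image Finset.univ (fun v => (anc a v).ncard)
    ⟨⟨0, hN⟩, Finset.mem_univ _⟩
  refine ⟨u, fun v => ?_⟩
  obtain ⟨w, hwu, hwv⟩ := hne u v
  have hsub : anc a w ⊆ anc a u := fun z hz => Relation.ReflTransGen.trans hz hwu
  have heq : anc a w = anc a u :=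
    Set.eq_of_subset_of_ncard_le hsub (hu w (Finset.mem_univ w)) (Set.toFinite _)
  have huw : u ∈ anc a w := heq ▸ anc_self a u
  exact Relation.ReflTransGen.trans huw hwv

end Graph
section Decomp

variable {N : ℕ} (a : Fin N → Fin N → ℝ)

/-- a constant larger than all diagonal entries of the Laplacian -/
noncomputable def lapShift : ℝ := 1 + ∑ i, ∑ k ∈ Finset.univ.erase i, a i k

/-- the nonnegative matrix `c•1 - L` -/
noncomputable def lapM : Matrix (Fin N) (Fin N) ℝ := lapShift a • 1 - graphLaplacian a

lemma lapM_diag (ha : ∀ i j, 0 ≤ a i j) (i : Fin N) : 1 ≤ lapM a i i := by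
  have h1 : lapM a i i = lapShift a - ∑ k ∈ Finset.univ.erase i, a i k := by
    simp [lapM, lapShift, lap_entry_diag, Matrix.one_apply]
  rw [h1, lapShift]
  have h2 : ∑ k ∈ Finset.univ.erase i, a i k
      ≤ ∑ i', ∑ k ∈ Finset.univ.erase i', a i' k := by
    refine Finset.single_le_sum (f := fun i' => ∑ k ∈ Finset.univ.erase i', a i' k)
      (fun i' _ => Finset.sum_nonneg fun k _ => ha i' k) (Finset.mem_univ i)
  linarith

lemma lapM_off (i j : Fin N) (h : i ≠ j) : lapM a i j = a i j := by
  simp [lapM, Matrix.one_apply, h, lap_entry_off a h]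

lemma lapM_nonneg (ha : ∀ i j, 0 ≤ a i j) (i j : Fin N) : 0 ≤ lapM a i j := by
  by_cases h : i = j
  · subst h; linarith [lapM_diag a ha i]
  · rw [lapM_off a i j h]; exact ha i j

lemma exp_decomp (t : ℝ) :
    exp ((-t) • graphLaplacian a)
      = Real.exp (-(t * lapShift a)) • exp (t • lapM a) := by
  have hsum : (-t) • graphLaplacian a = t • lapM a + (-(t * lapShift a)) • 1 := by
    simp only [lapM, smul_sub, smul_smul]
    module
  erw [hsum, exp_add_of_commute ((Commute.one_right (t • lapM a)).smul_right _),
    exp_smul_one, Matrix.mul_smul, mul_one]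
  rfl

lemma pow_pos_of_reach (ha : ∀ i j, 0 ≤ a i j) {r v : Fin N}
    (h : Relation.ReflTransGen (fun u v => 0 < a v u) r v) :
    ∃ k : ℕ, 0 < (lapM a ^ k) v r := by
  induction h with
  | refl => exact ⟨0, by simp [Matrix.one_apply]⟩
  | tail hru hstep ih =>
    obtain ⟨k, hk⟩ := ih
    refine ⟨k + 1, ?_⟩
    rw [show lapM a ^ (k + 1) = lapM a * lapM a ^ k from pow_succ' _ _, Matrix.mul_apply]
    refine Finset.sum_pos' (fun u _ => mul_nonneg (lapM_nonneg a ha _ _)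
      (pow_entry_nonneg (lapM_nonneg a ha) k _ _)) ?_
    rename_i b c
    refine ⟨b, Finset.mem_univ b, mul_pos ?_ hk⟩
    by_cases hvb : c = b
    · subst hvb; linarith [lapM_diag a ha c]
    · rw [lapM_off a c b hvb]; exact hstep

end Decomp
section NormAux

lemma enorm_nonneg' {m : Type*} [Fintype m] (v : m → ℝ) : 0 ≤ enorm' v := Real.sqrt_nonneg _

lemma abs_le_enorm {m : Type*} [Fintype m] (v : m → ℝ) (p : m) : |v p| ≤ enorm' v := by
  rw [enorm', ← Real.sqrt_sq_eq_abs]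
  exact Real.sqrt_le_sqrt (Finset.single_le_sum (f := fun q => v q ^ 2)
    (fun q _ => sq_nonneg _) (Finset.mem_univ p))

lemma enorm_le_of_forall_abs_le {m : Type*} [Fintype m] {v : m → ℝ} {C : ℝ} (hC : 0 ≤ C)
    (h : ∀ p, |v p| ≤ C) :
    enorm' v ≤ Real.sqrt (Fintype.card m) * C := by
  have h1 : ∑ p, v p ^ 2 ≤ (Fintype.card m : ℝ) * C ^ 2 := by
    calc ∑ p, v p ^ 2 ≤ ∑ _p : m, C ^ 2 := by
          refine Finset.sum_le_sum fun p _ => ?_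
          rw [← sq_abs]
          exact pow_le_pow_left₀ (abs_nonneg _) (h p) 2
      _ = (Fintype.card m : ℝ) * C ^ 2 := by
          rw [Finset.sum_const, nsmul_eq_mul, Finset.card_univ]
  calc enorm' v ≤ Real.sqrt ((Fintype.card m : ℝ) * C ^ 2) := Real.sqrt_le_sqrt h1
    _ = Real.sqrt (Fintype.card m) * C := by
        rw [Real.sqrt_mul (by positivity), Real.sqrt_sq hC]

end NormAux

section Semigroup

variable {N : ℕ} (L : Matrix (Fin N) (Fin N) ℝ)

lemma exp_semigroup (s t : ℝ) :
    exp ((-(s + t)) • L) = exp ((-s) • L) * exp ((-t) • L) := by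
  erw [← exp_add_of_commute (((Commute.refl L).smul_left (-s)).smul_right (-t))]
  congr 1
  module

end Semigroup
section Dynamics

variable {N n : ℕ} (a : Fin N → Fin N → ℝ)

lemma P_row_sum (t : ℝ) (i : Fin N) :
    ∑ j, (exp ((-t) • graphLaplacian a)) i j = 1 := by
  have h0 : ((-t) • graphLaplacian a).mulVec 1 = 0 := by
    rw [Matrix.smul_mulVec, lap_mulVec_one a, smul_zero]
  have h1 := exp_mulVec_fixed h0
  have h2 : (exp ((-t) • graphLaplacian a)).mulVec 1 i = ∑ j, (exp ((-t) • graphLaplacian a)) i j := by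
    simp [Matrix.mulVec, dotProduct]
  rw [← h2, h1, Pi.one_apply]

lemma P_nonneg (ha : ∀ i j, 0 ≤ a i j) {t : ℝ} (ht : 0 ≤ t) (i j : Fin N) :
    0 ≤ (exp ((-t) • graphLaplacian a)) i j := by
  rw [exp_decomp a t]
  refine smul_nonneg (Real.exp_nonneg _) ?_
  refine le_trans ?_ (exp_entry_nonneg (M := t • lapM a) (fun i' j' => ?_) i j)
  · rfl
  · have : (t • lapM a) i' j' = t * lapM a i' j' := rfl
    rw [this]
    exact mul_nonneg ht (lapM_nonneg a ha i' j')

lemma consensus_mulVec_eq (L : Matrix (Fin N) (Fin N) ℝ) (t : ℝ) (x0 : Fin N × Fin n → ℝ)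
    (i : Fin N) (k : Fin n) :
    (exp ((-t) • (L ⊗ₖ (1 : Matrix (Fin n) (Fin n) ℝ)))).mulVec x0 (i, k)
      = (exp ((-t) • L)).mulVec (fun j => x0 (j, k)) i := by
  have h1 : (-t) • (L ⊗ₖ (1 : Matrix (Fin n) (Fin n) ℝ))
      = ((-t) • L) ⊗ₖ (1 : Matrix (Fin n) (Fin n) ℝ) := (Matrix.smul_kronecker (-t) L 1).symm
  rw [h1, exp_kron, kron_mulVec]
  rfl

end Dynamics

section Forward

lemma forward_direction {N n : ℕ} (hN : 0 < N) (hn : 0 < n)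
    (a : Fin N → Fin N → ℝ) (ha : ∀ i j, 0 ≤ a i j)
    (hroot : hasRootedOutBranch a) :
    ∃ η > (0 : ℝ), ∃ lam > (0 : ℝ), ∀ x0 : Fin N × Fin n → ℝ,
      ∃ xinf : Fin N × Fin n → ℝ,
        (∀ i j : Fin N, ∀ k : Fin n, xinf (i, k) = xinf (j, k)) ∧
        ∀ t : ℝ, 0 ≤ t →
          enorm' ((exp ((-t) • (graphLaplacian a ⊗ₖ (1 : Matrix (Fin n) (Fin n) ℝ)))).mulVec x0
              - xinf)
            ≤ η * Real.exp (-lam * t) * enorm' (x0 - xinf) := by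
  classical
  obtain ⟨r, hroot⟩ := hroot
  have he : (Finset.univ : Finset (Fin N)).Nonempty := ⟨⟨0, hN⟩, Finset.mem_univ _⟩
  set L := graphLaplacian a with hLdef
  set P : ℝ → Matrix (Fin N) (Fin N) ℝ := fun t => exp ((-t) • L) with hPdef
  -- positive column of P 1
  have hP1col : ∀ v, 0 < P 1 v r := by
    intro v
    have h1 : P 1 = Real.exp (-(1 * lapShift a)) • exp ((1 : ℝ) • lapM a) := exp_decomp a 1
    obtain ⟨k, hk⟩ := pow_pos_of_reach a ha (hroot v)
    have h2 : ((k ! : ℝ))⁻¹ • (lapM a ^ k) v r ≤ (exp (lapM a)) v r :=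
      exp_entry_ge_term (lapM_nonneg a ha) k v r
    have h3 : 0 < (exp (lapM a)) v r := by
      refine lt_of_lt_of_le ?_ h2
      have : (0:ℝ) < ((k ! : ℝ))⁻¹ := by positivity
      exact smul_pos this hk
    rw [h1]
    have : ((1 : ℝ) • lapM a) = lapM a := one_smul _ _
    rw [this]
    exact smul_pos (Real.exp_pos _) h3
  set δ : ℝ := min (Finset.univ.inf' he (fun v => P 1 v r)) (1/2) with hδdef
  have hδpos : 0 < δ := by
    refine lt_min ?_ (by norm_num)
    rw [Finset.lt_inf'_iff]
    exact fun v _ => hP1col v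
  have hδcol : ∀ v, δ ≤ P 1 v r := fun v =>
    le_trans (min_le_left _ _) (Finset.inf'_le _ (Finset.mem_univ v))
  have hδhalf : δ ≤ 1/2 := min_le_right _ _
  set β : ℝ := 1 - δ with hβdef
  have hβpos : 0 < β := by simp only [hβdef]; linarith
  have hβlt : β < 1 := by simp only [hβdef]; linarith
  set lam : ℝ := -Real.log β with hlamdef
  have hlam : 0 < lam := by
    simp only [hlamdef, neg_pos]
    exact Real.log_neg hβpos hβlt
  set η : ℝ := 2 * Real.sqrt (N * n) * β⁻¹ with hηdef
  have hη : 0 < η := by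
    have h1 : (0:ℝ) < N * n := by positivity
    have : 0 < Real.sqrt (N * n) := Real.sqrt_pos.mpr h1
    positivity
  refine ⟨η, hη, lam, hlam, fun x0 => ?_⟩
  -- per–coordinate dynamics
  set y : Fin n → ℝ → Fin N → ℝ := fun k t => (P t).mulVec (fun j => x0 (j, k)) with hydef
  have hrowP : ∀ t i, ∑ j, P t i j = 1 := fun t i => P_row_sum a t i
  have hnnP : ∀ t : ℝ, 0 ≤ t → ∀ i j, 0 ≤ P t i j := fun t ht => P_nonneg a ha ht
  have hystep : ∀ k (s t : ℝ), y k (s + t) = (P s).mulVec (y k t) := by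
    intro k s t
    simp only [hydef, hPdef]
    rw [exp_semigroup L s t, ← Matrix.mulVec_mulVec]
  have hy0 : ∀ k, y k 0 = fun j => x0 (j, k) := by
    intro k
    simp only [hydef, hPdef, neg_zero, zero_smul, exp_zero, Matrix.one_mulVec]
  -- inf and sup sequences
  set mn : Fin n → ℕ → ℝ := fun k m => Finset.univ.inf' he (y k m) with hmndef
  set mx : Fin n → ℕ → ℝ := fun k m => Finset.univ.sup' he (y k m) with hmxdef
  have hrange : ∀ k (s : ℝ), 0 ≤ s → ∀ (t : ℝ) i,
      Finset.univ.inf' he (y k t) ≤ y k (s + t) i ∧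
        y k (s + t) i ≤ Finset.univ.sup' he (y k t) := by
    intro k s hs t i
    rw [hystep k s t]
    exact ⟨stoch_mulVec_ge he (hnnP s hs) (hrowP s) (y k t) i,
      stoch_mulVec_le he (hnnP s hs) (hrowP s) (y k t) i⟩
  have hcast : ∀ m : ℕ, ((m + 1 : ℕ) : ℝ) = 1 + (m : ℝ) := by intro m; push_cast; ring
  have hmn_mono : ∀ k m, mn k m ≤ mn k (m + 1) := by
    intro k m
    refine Finset.le_inf' he _ fun i _ => ?_
    rw [show y k ((m+1:ℕ):ℝ) = y k (1 + (m:ℝ)) by rw [hcast]]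
    exact (hrange k 1 zero_le_one (m:ℝ) i).1
  have hmx_anti : ∀ k m, mx k (m + 1) ≤ mx k m := by
    intro k m
    refine Finset.sup'_le he _ fun i _ => ?_
    rw [show y k ((m+1:ℕ):ℝ) = y k (1 + (m:ℝ)) by rw [hcast]]
    exact (hrange k 1 zero_le_one (m:ℝ) i).2
  have hmn_le_mx : ∀ k m, mn k m ≤ mx k m := fun k m => inf'_le_sup' he _
  have hcontr : ∀ k m, mx k (m+1) - mn k (m+1) ≤ β * (mx k m - mn k m) := by
    intro k m
    have h1 : y k ((m+1:ℕ):ℝ) = (P 1).mulVec (y k m) := by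
      rw [show y k ((m+1:ℕ):ℝ) = y k (1 + (m:ℝ)) by rw [hcast]]
      exact hystep k 1 (m:ℝ)
    simp only [hmndef, hmxdef, h1]
    exact stoch_contraction he hδpos.le (hnnP 1 zero_le_one) (hrowP 1) hδcol (y k (m:ℝ))
  have hgeo : ∀ k m, mx k m - mn k m ≤ β ^ m * (mx k 0 - mn k 0) := by
    intro k m
    induction m with
    | zero => simp
    | succ m ih =>
      calc mx k (m+1) - mn k (m+1) ≤ β * (mx k m - mn k m) := hcontr k m
        _ ≤ β * (β ^ m * (mx k 0 - mn k 0)) := by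
            exact mul_le_mul_of_nonneg_left ih hβpos.le
        _ = β ^ (m+1) * (mx k 0 - mn k 0) := by ring
  -- monotone convergence to the consensus value
  have hmn_mono' : ∀ k, Monotone (mn k) := fun k => monotone_nat_of_le_succ (hmn_mono k)
  have hmx_anti' : ∀ k, Antitone (mx k) := fun k => antitone_nat_of_succ_le (hmx_anti k)
  have hmn_le_mx' : ∀ k m m', mn k m ≤ mx k m' := by
    intro k m m'
    rcases le_total m m' with h | h
    · exact le_trans (hmn_mono' k h) (hmn_le_mx k m')
    · exact le_trans (hmn_le_mx k m) (hmx_anti' k h)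
  set c : Fin n → ℝ := fun k => ⨆ m : ℕ, mn k m with hcdef
  have hbdd : ∀ k, BddAbove (Set.range (mn k)) := by
    intro k
    exact ⟨mx k 0, by rintro z ⟨m, rfl⟩; exact hmn_le_mx' k m 0⟩
  have hc_ge : ∀ k m, mn k m ≤ c k := fun k m => le_ciSup (hbdd k) m
  have hc_le : ∀ k m, c k ≤ mx k m := fun k m => ciSup_le fun m' => hmn_le_mx' k m' m
  -- coordinatewise estimate
  have hcoord : ∀ k (t : ℝ), 0 ≤ t → ∀ i,
      |y k t i - c k| ≤ β ^ (⌊t⌋₊) * (mx k 0 - mn k 0) := by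
    intro k t ht i
    set m := ⌊t⌋₊ with hm
    have hts : t = (t - m) + m := by ring
    have hys : mn k m ≤ y k t i ∧ y k t i ≤ mx k m := by
      have h1 := hrange k (t - m) (by simp only [sub_nonneg]; exact Nat.floor_le ht) (m:ℝ) i
      rw [← hts] at h1
      exact h1
    have habs : |y k t i - c k| ≤ mx k m - mn k m := by
      rw [abs_le]
      constructor
      · have := hc_le k m
        linarith [hys.1]
      · have := hc_ge k m
        linarith [hys.2]
    exact le_trans habs (hgeo k m)
  -- exponential bound on β ^ ⌊t⌋
  have hβexp : ∀ t : ℝ, 0 ≤ t → β ^ (⌊t⌋₊) ≤ β⁻¹ * Real.exp (-lam * t) := by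
    intro t ht
    have h1 : (β : ℝ) ^ (⌊t⌋₊) = Real.exp ((⌊t⌋₊ : ℝ) * Real.log β) := by
      rw [Real.exp_nat_mul, Real.exp_log hβpos]
    have hlog : Real.log β < 0 := Real.log_neg hβpos hβlt
    have h2 : (t - 1) < (⌊t⌋₊ : ℝ) := Nat.sub_one_lt_floor t
    have h3 : (⌊t⌋₊ : ℝ) * Real.log β ≤ (t - 1) * Real.log β := by
      nlinarith
    calc β ^ (⌊t⌋₊) = Real.exp ((⌊t⌋₊ : ℝ) * Real.log β) := h1
      _ ≤ Real.exp ((t - 1) * Real.log β) := Real.exp_le_exp.mpr h3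
      _ = β⁻¹ * Real.exp (-lam * t) := by
          rw [show (t - 1) * Real.log β = -Real.log β + t * Real.log β by ring,
            Real.exp_add, Real.exp_neg, Real.exp_log hβpos]
          congr 2
          simp only [hlamdef]
          ring
  -- the consensus point
  set xinf : Fin N × Fin n → ℝ := fun p => c p.2 with hxinfdef
  refine ⟨xinf, fun i j k => rfl, fun t ht => ?_⟩
  set E : ℝ := enorm' (x0 - xinf) with hEdef
  have hE0 : 0 ≤ E := enorm_nonneg' _
  -- the spread at time 0 is at most 2 E
  have hspread : ∀ k, mx k 0 - mn k 0 ≤ 2 * E := by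
    intro k
    obtain ⟨imax, _, hmax⟩ := Finset.exists_mem_eq_sup' he (y k 0)
    obtain ⟨imin, _, hmin⟩ := Finset.exists_mem_eq_inf' he (y k 0)
    have h1 : |x0 (imax, k) - c k| ≤ E := by
      have := abs_le_enorm (x0 - xinf) (imax, k)
      simpa [hxinfdef] using this
    have h2 : |x0 (imin, k) - c k| ≤ E := by
      have := abs_le_enorm (x0 - xinf) (imin, k)
      simpa [hxinfdef] using this
    have hy0max : mx k 0 = x0 (imax, k) := by
      rw [hmxdef]
      simp only [Nat.cast_zero] at hmax ⊢
      rw [hmax, hy0]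
    have hy0min : mn k 0 = x0 (imin, k) := by
      rw [hmndef]
      simp only [Nat.cast_zero] at hmin ⊢
      rw [hmin, hy0]
    rw [hy0max, hy0min]
    have := abs_le.mp h1
    have := abs_le.mp h2
    linarith [(abs_le.mp h1).2, (abs_le.mp h2).1]
  -- entries of the difference
  have hentry : ∀ i k,
      ((exp ((-t) • (L ⊗ₖ (1 : Matrix (Fin n) (Fin n) ℝ)))).mulVec x0 - xinf) (i, k)
        = y k t i - c k := by
    intro i k
    have := consensus_mulVec_eq (n := n) L t x0 i k
    simp only [Pi.sub_apply, this, hxinfdef, hydef, hPdef]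
  have hterm : ∀ p : Fin N × Fin n,
      |((exp ((-t) • (L ⊗ₖ (1 : Matrix (Fin n) (Fin n) ℝ)))).mulVec x0 - xinf) p|
        ≤ β⁻¹ * Real.exp (-lam * t) * (2 * E) := by
    rintro ⟨i, k⟩
    rw [hentry i k]
    calc |y k t i - c k| ≤ β ^ (⌊t⌋₊) * (mx k 0 - mn k 0) := hcoord k t ht i
      _ ≤ (β⁻¹ * Real.exp (-lam * t)) * (2 * E) := by
          have h1 := hβexp t ht
          have h2 := hspread k
          have h3 : 0 ≤ β ^ (⌊t⌋₊) := pow_nonneg hβpos.le _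
          have h4 : mx k 0 - mn k 0 ≤ 2 * E := h2
          have h5 : 0 ≤ mx k 0 - mn k 0 := by
            have := hmn_le_mx k 0; linarith
          have h6 : 0 ≤ β⁻¹ * Real.exp (-lam * t) := by positivity
          nlinarith
  calc enorm' ((exp ((-t) • (L ⊗ₖ (1 : Matrix (Fin n) (Fin n) ℝ)))).mulVec x0 - xinf)
      ≤ Real.sqrt (Fintype.card (Fin N × Fin n)) * (β⁻¹ * Real.exp (-lam * t) * (2 * E)) := by
        refine enorm_le_of_forall_abs_le ?_ hterm
        have : (0:ℝ) ≤ Real.exp (-lam * t) := (Real.exp_pos _).le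
        positivity
    _ = η * Real.exp (-lam * t) * E := by
        simp only [Fintype.card_prod, Fintype.card_fin, hηdef]
        push_cast
        ring

end Forward

section Backward

lemma exp_block_zero {N : ℕ} {M : Matrix (Fin N) (Fin N) ℝ} {S : Set (Fin N)}
    (hM : ∀ i ∈ S, ∀ j ∉ S, M i j = 0) :
    ∀ i ∈ S, ∀ j ∉ S, (exp M) i j = 0 := by
  intro i hi j hj
  rw [exp_entry_eq]
  have : ∀ k : ℕ, ((k ! : ℝ))⁻¹ • (M ^ k) i j = 0 := by
    intro k
    rw [pow_block_zero hM k i hi j hj, smul_zero]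
  rw [tsum_congr this, tsum_zero]

lemma backward_direction {N n : ℕ} (hN : 0 < N) (hn : 0 < n)
    (a : Fin N → Fin N → ℝ) (ha : ∀ i j, 0 ≤ a i j)
    (h : ∃ η > (0 : ℝ), ∃ lam > (0 : ℝ), ∀ x0 : Fin N × Fin n → ℝ,
      ∃ xinf : Fin N × Fin n → ℝ,
        (∀ i j : Fin N, ∀ k : Fin n, xinf (i, k) = xinf (j, k)) ∧
        ∀ t : ℝ, 0 ≤ t →
          enorm' ((exp ((-t) • (graphLaplacian a ⊗ₖ (1 : Matrix (Fin n) (Fin n) ℝ)))).mulVec x0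
              - xinf)
            ≤ η * Real.exp (-lam * t) * enorm' (x0 - xinf)) :
    hasRootedOutBranch a := by
  classical
  by_contra hnoroot
  obtain ⟨η, hη, lam, hlam, hconv⟩ := h
  obtain ⟨i0, j0, hdisj⟩ := exists_disjoint_anc a hN hnoroot
  set L := graphLaplacian a with hLdef
  set S1 := anc a i0 with hS1
  set S2 := anc a j0 with hS2
  set χ : Fin N → ℝ := fun j => if j ∈ S1 then 1 else 0 with hχ
  set x0 : Fin N × Fin n → ℝ := fun p => χ p.1 with hx0
  obtain ⟨xinf, hcons, hbd⟩ := hconv x0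
  set k0 : Fin n := ⟨0, hn⟩ with hk0
  -- block-zero structure
  have hz : ∀ (S : Set (Fin N)) (hScl : ∀ w ∈ S, ∀ j ∉ S, a w j = 0) (t : ℝ),
      ∀ w ∈ S, ∀ j ∉ S, (exp ((-t) • L)) w j = 0 := by
    intro S hScl t w hw j hj
    refine exp_block_zero (fun w' hw' j' hj' => ?_) w hw j hj
    have hne : w' ≠ j' := fun hEq => hj' (hEq ▸ hw')
    have : L w' j' = -(a w' j') := lap_entry_off a hne
    have h0 : a w' j' = 0 := hScl w' hw' j' hj'
    simp [Matrix.smul_apply, this, h0]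
  have hS1cl : ∀ w ∈ S1, ∀ j ∉ S1, a w j = 0 := fun w hw j hj => anc_closed a hw hj ha
  have hS2cl : ∀ w ∈ S2, ∀ j ∉ S2, a w j = 0 := fun w hw j hj => anc_closed a hw hj ha
  -- values of the solution
  have hval1 : ∀ t : ℝ, (exp ((-t) • L)).mulVec χ i0 = 1 := by
    intro t
    have : (exp ((-t) • L)).mulVec χ i0 = ∑ j, (exp ((-t) • L)) i0 j * χ j := rfl
    rw [this]
    have hterm : ∀ j, (exp ((-t) • L)) i0 j * χ j = (exp ((-t) • L)) i0 j := by
      intro j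
      by_cases hj : j ∈ S1
      · simp [hχ, hj]
      · rw [hz S1 hS1cl t i0 (anc_self a i0) j hj]
        simp
    rw [Finset.sum_congr rfl fun j _ => hterm j]
    exact P_row_sum a t i0
  have hval2 : ∀ t : ℝ, (exp ((-t) • L)).mulVec χ j0 = 0 := by
    intro t
    have : (exp ((-t) • L)).mulVec χ j0 = ∑ j, (exp ((-t) • L)) j0 j * χ j := rfl
    rw [this]
    refine Finset.sum_eq_zero fun j _ => ?_
    by_cases hj : j ∈ S1
    · have hj2 : j ∉ S2 := by
        intro hj2
        have : j ∈ S1 ∩ S2 := ⟨hj, hj2⟩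
        rw [hdisj] at this
        exact this
      rw [hz S2 hS2cl t j0 (anc_self a j0) j hj2, zero_mul]
    · simp [hχ, hj]
  -- the common consensus value
  set cv : ℝ := xinf (i0, k0) with hcv
  have hcv2 : xinf (j0, k0) = cv := (hcons j0 i0 k0)
  set E : ℝ := enorm' (x0 - xinf) with hE
  have hE0 : 0 ≤ E := enorm_nonneg' _
  -- choose a large time
  set t : ℝ := (2 * η * E + 1) / lam with ht
  have ht0 : 0 ≤ t := by positivity
  have hbd' := hbd t ht0
  -- coordinates of the solution at time t
  have hsol1 : (exp ((-t) • (L ⊗ₖ (1 : Matrix (Fin n) (Fin n) ℝ)))).mulVec x0 (i0, k0) = 1 := by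
    rw [consensus_mulVec_eq L t x0 i0 k0]
    have : (fun j => x0 (j, k0)) = χ := rfl
    rw [this, hval1]
  have hsol2 : (exp ((-t) • (L ⊗ₖ (1 : Matrix (Fin n) (Fin n) ℝ)))).mulVec x0 (j0, k0) = 0 := by
    rw [consensus_mulVec_eq L t x0 j0 k0]
    have : (fun j => x0 (j, k0)) = χ := rfl
    rw [this, hval2]
  -- derive the contradiction
  have h1 : |1 - cv| ≤ η * Real.exp (-lam * t) * E := by
    have := abs_le_enorm ((exp ((-t) • (L ⊗ₖ (1 : Matrix (Fin n) (Fin n) ℝ)))).mulVec x0 - xinf)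
      (i0, k0)
    rw [Pi.sub_apply, hsol1] at this
    exact le_trans this hbd'
  have h2 : |0 - cv| ≤ η * Real.exp (-lam * t) * E := by
    have := abs_le_enorm ((exp ((-t) • (L ⊗ₖ (1 : Matrix (Fin n) (Fin n) ℝ)))).mulVec x0 - xinf)
      (j0, k0)
    rw [Pi.sub_apply, hsol2, hcv2] at this
    exact le_trans this hbd'
  have hsum : (1:ℝ) ≤ 2 * (η * Real.exp (-lam * t) * E) := by
    have : (1:ℝ) = |(1 - cv) - (0 - cv)| := by norm_num
    rw [this]
    calc |(1 - cv) - (0 - cv)| ≤ |1 - cv| + |0 - cv| := abs_sub _ _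
      _ ≤ 2 * (η * Real.exp (-lam * t) * E) := by linarith
  -- but the right side is < 1
  have hlt : 2 * (η * Real.exp (-lam * t) * E) < 1 := by
    have hlamt : lam * t = 2 * η * E + 1 := by
      rw [ht, mul_div_cancel₀ _ (ne_of_gt hlam)]
    have hexp : 2 * η * E + 2 ≤ Real.exp (lam * t) := by
      rw [hlamt]
      have := Real.add_one_le_exp (2 * η * E + 1)
      linarith
    have hexppos : 0 < Real.exp (lam * t) := Real.exp_pos _
    rw [show -lam * t = -(lam * t) by ring, Real.exp_neg]
    rw [show 2 * (η * (Real.exp (lam * t))⁻¹ * E) = (2 * η * E) / Real.exp (lam * t) by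
      field_simp]
    rw [div_lt_one hexppos]
    have h2ηE : 0 ≤ 2 * η * E := by positivity
    linarith
  linarith

end Backward

/-- for the consensus dynamics `ẋ = −(L ⊗ Iₙ) x`, whose solution is
`x(t) = exp(−t (L ⊗ Iₙ)) x(0)`, the graph has a rooted-out branch iff there are `η, λ > 0`
such that every solution converges exponentially to some point of the consensus set. -/
theorem consensus_globally_exponentially_stable_iff_rootedOutBranch
    (N n : ℕ) (hN : 0 < N) (hn : 0 < n)
    (a : Fin N → Fin N → ℝ) (ha : ∀ i j, 0 ≤ a i j)
    (L : Matrix (Fin N) (Fin N) ℝ) (hL : L = graphLaplacian a) :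
    hasRootedOutBranch a ↔
      ∃ η > (0 : ℝ), ∃ lam > (0 : ℝ), ∀ x0 : Fin N × Fin n → ℝ,
        ∃ xinf : Fin N × Fin n → ℝ,
          (∀ i j : Fin N, ∀ k : Fin n, xinf (i, k) = xinf (j, k)) ∧
          ∀ t : ℝ, 0 ≤ t →
            enorm' ((NormedSpace.exp ((-t) • (L ⊗ₖ (1 : Matrix (Fin n) (Fin n) ℝ)))).mulVec x0
                - xinf)
              ≤ η * Real.exp (-lam * t) * enorm' (x0 - xinf) := by
  subst hL
  exact ⟨fun h => forward_direction hN hn a ha h, fun h => backward_direction hN hn a ha h⟩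
end

section
/- Let G be a connected undirected weighted graph on {1,…,N} with symmetric nonnegative weights a_{ij} = a_{ji} ≥ 0, and let wrap : ℝ → (−π, π] denote reduction modulo 2π. Suppose θ_1,…,θ_N : [0,∞) → ℝ are differentiable and satisfy the coupled oscillator dynamics θ̇_i(t) = Σ_{j : a_{ij} > 0} a_{ij} · wrap(θ_j(t) − θ_i(t)). If there exists γ ∈ ℝ such that θ_i(0) ∈ (γ, γ + π) for every i (i.e., all initial phases lie in an open semicircle), then the interval [min_j θ_j(0), max_j θ_j(0)] is positively invariant (θ_i(t) remains in it for all t ≥ 0 and all i), and the phases synchronize exponentially: there exist c > 0 and λ > 0 such that max_{i,j} |θ_i(t) − θ_j(t)| ≤ c e^{−λ t} for all t ≥ 0. -/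
/-!
While all phases lie in an interval of length less than `π`, `wrap` is the identity on their
differences, so the dynamics is the linear consensus flow `ẋ = -L x`: the largest phase cannot
increase and the smallest cannot decrease. A continuity argument turns this into positive
invariance of `[min θ(0), max θ(0)]`.

Along the consensus flow the dispersion `V = ∑ᵤ ∑ᵥ (xᵤ - xᵥ)²` has derivative `-2N E`, where
`E = ∑ᵤ ∑ᵥ aᵤᵥ (xᵤ - xᵥ)²` is the Dirichlet energy of the graph. Bounding each difference
`xᵤ - xᵥ` along a path of edges gives `κ V ≤ E` for some `κ > 0`, so `V` decays like
`exp (-2Nκ t)` by Grönwall's inequality.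
-/

open Real

/-- `wrap x` is the unique representative of `x` modulo `2π` lying in `(−π, π]`. -/
noncomputable def wrap (x : ℝ) : ℝ :=
  x - 2 * π * (⌈(x - π) / (2 * π)⌉ : ℤ)

open Set Filter Topology Finset Relation

theorem wrap_eq_self_of_abs_lt {x : ℝ} (hx : |x| < π) : wrap x = x := by
  obtain ⟨h1, h2⟩ := abs_lt.1 hx
  have hceil : ⌈(x - π) / (2 * π)⌉ = 0 := by
    rw [Int.ceil_eq_zero_iff, Set.mem_Ioc, lt_div_iff₀ (by positivity)]
    exact ⟨by linarith, div_nonpos_of_nonpos_of_nonneg (by linarith) (by positivity)⟩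
  simp [wrap, hceil]

theorem HasDerivAt.eventually_nhdsGT_lt_add_mul {f : ℝ → ℝ} {f' y C r : ℝ}
    (hf : HasDerivAt f f' y) (hy : f y ≤ C) (hC : f y = C → f' ≤ 0) (hr : 0 < r) :
    ∀ᶠ z in 𝓝[>] y, f z < C + r * (z - y) := by
  rcases hy.lt_or_eq with hlt | heq
  · filter_upwards [(hf.continuousAt.eventually_lt_const hlt).filter_mono nhdsWithin_le_nhds,
      self_mem_nhdsWithin] with z hz hyz
    nlinarith [mul_pos hr (sub_pos.2 hyz)]
  · filter_upwards [hf.tendsto_slope.mono_left (nhdsGT_le_nhdsNE y)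
      |>.eventually_lt_const ((hC heq).trans_lt hr), self_mem_nhdsWithin] with z hz hyz
    rw [slope_def_field, div_lt_iff₀ (sub_pos.2 hyz)] at hz
    linarith

theorem eventually_slope_sup'_lt {ι : Type*} [Fintype ι] {f : ι → ℝ → ℝ} {f' : ι → ℝ} {y r : ℝ}
    (hne : (univ : Finset ι).Nonempty) (hf : ∀ i, HasDerivAt (f i) (f' i) y)
    (hmax : ∀ i, (∀ j, f j y ≤ f i y) → f' i ≤ 0) (hr : 0 < r) :
    ∀ᶠ z in 𝓝[>] y, slope (fun x => univ.sup' hne (f · x)) y z < r := by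
  have hle : ∀ j x, f j x ≤ univ.sup' hne (f · x) := fun j x => le_sup' (f · x) (mem_univ j)
  have hall : ∀ᶠ z in 𝓝[>] y, ∀ j, f j z < univ.sup' hne (f · y) + r * (z - y) :=
    eventually_all.2 fun j => (hf j).eventually_nhdsGT_lt_add_mul (hle j y)
      (fun h => hmax j fun k => h ▸ hle k y) hr
  filter_upwards [hall, self_mem_nhdsWithin] with z hz hyz
  rw [slope_def_field, div_lt_iff₀ (sub_pos.2 hyz), sub_lt_iff_lt_add']
  exact (sup'_lt_iff hne).2 fun j _ => hz j

theorem le_of_deriv_nonpos_at_argmax {ι : Type*} [Fintype ι] {f f' : ι → ℝ → ℝ} {a C δ : ℝ}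
    (hδ : 0 < δ) (hf : ∀ i, ∀ x, a ≤ x → HasDerivAt (f i) (f' i x) x)
    (hmax : ∀ x, a ≤ x → (∀ j, f j x < C + δ) → ∀ i, (∀ j, f j x ≤ f i x) → f' i x ≤ 0)
    (ha : ∀ i, f i a ≤ C) {x : ℝ} (hx : a ≤ x) (i : ι) : f i x ≤ C := by
  have hne : (univ : Finset ι).Nonempty := ⟨i, mem_univ i⟩
  set g : ℝ → ℝ := fun x => univ.sup' hne (f · x)
  have hle : ∀ j x, f j x ≤ g x := fun j x => le_sup' (f · x) (mem_univ j)
  have hg : ∀ y, a ≤ y → ContinuousAt g y := fun y hy =>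
    ContinuousAt.finset_sup'_apply hne fun j _ => (hf j y hy).continuousAt
  suffices Icc a x ⊆ {y | g y ≤ C} from (hle i x).trans (this ⟨hx, le_rfl⟩)
  refine IsClosed.Icc_subset_of_forall_mem_nhdsWithin ?_ (sup'_le _ _ fun j _ => ha j) ?_
  · rw [inter_comm]
    exact ContinuousOn.preimage_isClosed_of_isClosed
      (fun y hy => (hg y hy.1).continuousWithinAt) isClosed_Icc isClosed_Iic
  · rintro y ⟨hgy, hy, -⟩
    obtain ⟨c, hyc, hc⟩ := mem_nhdsGE_iff_exists_Icc_subset.1 <|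
      (hg y hy).eventually_lt_const (hgy.out.trans_lt (lt_add_of_pos_right C hδ))
        |>.filter_mono nhdsWithin_le_nhds
    have hdecr : ∀ z ∈ Icc y c, g z ≤ g y :=
      image_le_of_liminf_slope_right_le_deriv_boundary (B := fun _ => g y) (B' := 0)
        (fun z hz => (hg z (hy.trans hz.1)).continuousWithinAt) le_rfl continuousOn_const
        (fun _ _ => hasDerivWithinAt_const _ _ _)
        (fun z hz r hr => (eventually_slope_sup'_lt hne (fun j => hf j z (hy.trans hz.1))
          (hmax z (hy.trans hz.1) fun j => (hle j z).trans_lt (hc (Ico_subset_Icc_self hz)))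
          hr).frequently)
    filter_upwards [Icc_mem_nhdsGT hyc] with z hz using (hdecr z hz).trans hgy

theorem mem_Icc_of_hasDerivAt_wrap {ι : Type*} [Fintype ι] {a : ι → ι → ℝ}
    (ha : ∀ i j, 0 ≤ a i j) {θ : ι → ℝ → ℝ}
    (hdyn : ∀ i, ∀ t : ℝ, 0 ≤ t → HasDerivAt (θ i) (∑ j, a i j * wrap (θ j t - θ i t)) t)
    {m M : ℝ} (hmM : M - m < π) (h0 : ∀ i, θ i 0 ∈ Icc m M) {t : ℝ} (ht : 0 ≤ t) (i : ι) :
    θ i t ∈ Icc m M := by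
  set drift : ι → ℝ → ℝ := fun i t => ∑ j, a i j * wrap (θ j t - θ i t)
  set f : ι ⊕ ι → ℝ → ℝ := Sum.elim (fun i t => θ i t - M) (fun i t => m - θ i t)
  set f' : ι ⊕ ι → ℝ → ℝ := Sum.elim drift fun i t => -drift i t
  have hf : ∀ k x, 0 ≤ x → HasDerivAt (f k) (f' k x) x := by
    rintro (i | i) x hx
    · exact (hdyn i x hx).sub_const M
    · exact (hdyn i x hx).const_sub m
  have hf0 : ∀ k, f k 0 ≤ 0 := by
    simp only [f, Sum.forall, Sum.elim_inl, Sum.elim_inr, sub_nonpos]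
    exact ⟨fun i => (h0 i).2, fun i => (h0 i).1⟩
  -- excesses below `(π - (M - m)) / 2` keep every phase difference in `(-π, π)`
  have hmax : ∀ x, 0 ≤ x → (∀ k, f k x < 0 + (π - (M - m)) / 2) →
      ∀ k, (∀ l, f l x ≤ f k x) → f' k x ≤ 0 := by
    intro x _ hnear
    simp only [f, Sum.forall, Sum.elim_inl, Sum.elim_inr, zero_add] at hnear
    have hwrap : ∀ i j, wrap (θ j x - θ i x) = θ j x - θ i x := fun i j =>
      wrap_eq_self_of_abs_lt (abs_sub_lt_iff.2 ⟨by linarith [hnear.1 j, hnear.2 i],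
        by linarith [hnear.1 i, hnear.2 j]⟩)
    simp only [f, f', Sum.forall, Sum.elim_inl, Sum.elim_inr, drift, hwrap]
    refine ⟨fun i hi => sum_nonpos fun j _ => ?_, fun i hi => ?_⟩
    · exact mul_nonpos_of_nonneg_of_nonpos (ha i j) (by linarith [hi.1 j])
    · exact neg_nonpos.2 (sum_nonneg fun j _ => mul_nonneg (ha i j) (by linarith [hi.2 j]))
  have hle := le_of_deriv_nonpos_at_argmax (by linarith) hf hmax hf0 ht
  exact ⟨sub_nonpos.1 (hle (.inr i)), sub_nonpos.1 (hle (.inl i))⟩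

theorem Relation.ReflTransGen.exists_dist_le_mul {α E : Type*} [PseudoMetricSpace E]
    {r : α → α → Prop} {u v : α} (h : ReflTransGen r u v) :
    ∃ n : ℕ, ∀ (x : α → E) (s : ℝ), (∀ i j, r i j → dist (x i) (x j) ≤ s) →
      dist (x u) (x v) ≤ n * s := by
  induction h with
  | refl => exact ⟨0, fun x s _ => by simp⟩
  | tail _ hedge ih =>
    obtain ⟨n, hn⟩ := ih
    refine ⟨n + 1, fun x s hs => ?_⟩
    calc _ ≤ _ := dist_triangle _ _ _
      _ ≤ n * s + s := add_le_add (hn x s hs) (hs _ _ hedge)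
      _ = (n + 1 : ℕ) * s := by push_cast; ring

section Consensus

variable {ι : Type*} [Fintype ι] {a : ι → ι → ℝ}

def dirichletEnergy (a : ι → ι → ℝ) (x : ι → ℝ) : ℝ :=
  ∑ u, ∑ v, a u v * (x u - x v) ^ 2

theorem dirichletEnergy_one (x : ι → ℝ) : dirichletEnergy 1 x = ∑ u, ∑ v, (x u - x v) ^ 2 := by
  simp [dirichletEnergy]

theorem dirichletEnergy_nonneg (ha : ∀ i j, 0 ≤ a i j) (x : ι → ℝ) : 0 ≤ dirichletEnergy a x :=
  sum_nonneg fun u _ => sum_nonneg fun v _ => mul_nonneg (ha u v) (sq_nonneg _)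

theorem mul_sq_sub_le_dirichletEnergy (ha : ∀ i j, 0 ≤ a i j) (x : ι → ℝ) (u v : ι) :
    a u v * (x u - x v) ^ 2 ≤ dirichletEnergy a x :=
  (single_le_sum (f := fun v => a u v * (x u - x v) ^ 2)
      (fun w _ => mul_nonneg (ha u w) (sq_nonneg _)) (mem_univ v)).trans <|
    single_le_sum (f := fun u => ∑ v, a u v * (x u - x v) ^ 2)
      (fun w _ => sum_nonneg fun v _ => mul_nonneg (ha w v) (sq_nonneg _)) (mem_univ u)

theorem sq_sub_le_dirichletEnergy_one (x : ι → ℝ) (u v : ι) :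
    (x u - x v) ^ 2 ≤ dirichletEnergy 1 x := by
  simpa using mul_sq_sub_le_dirichletEnergy (a := 1) (fun _ _ => zero_le_one) x u v

theorem sum_sum_mul_swap (ha : ∀ i j, a i j = a j i) (g : ι → ι → ℝ) :
    ∑ u, ∑ v, a u v * g u v = ∑ u, ∑ v, a u v * g v u := by
  rw [sum_comm]
  exact sum_congr rfl fun u _ => sum_congr rfl fun v _ => by rw [ha]

theorem sum_sum_mul_sub_eq_zero (ha : ∀ i j, a i j = a j i) (x : ι → ℝ) :
    ∑ u, ∑ v, a u v * (x v - x u) = 0 := by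
  have h := sum_sum_mul_swap ha fun u v => x v - x u
  simp only [mul_sub, sum_sub_distrib] at h ⊢
  linarith

theorem two_mul_sum_mul_sum_mul_sub (ha : ∀ i j, a i j = a j i) (x : ι → ℝ) :
    2 * ∑ u, x u * ∑ v, a u v * (x v - x u) = -dirichletEnergy a x := by
  have h := sum_sum_mul_swap ha fun u v => x u * (x v - x u)
  have hsum : ∑ u, ∑ v, a u v * (x u * (x v - x u)) + ∑ u, ∑ v, a u v * (x v * (x u - x v))
      = -dirichletEnergy a x := by
    simp only [dirichletEnergy, ← sum_add_distrib, ← sum_neg_distrib]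
    exact sum_congr rfl fun u _ => sum_congr rfl fun v _ => by ring
  have hdist : ∑ u, x u * ∑ v, a u v * (x v - x u) = ∑ u, ∑ v, a u v * (x u * (x v - x u)) := by
    simp only [mul_sum, mul_left_comm (x _)]
  linarith

theorem sum_sum_sub_mul_sub (x y : ι → ℝ) :
    ∑ u, ∑ v, (x u - x v) * (y u - y v)
      = 2 * (Fintype.card ι * ∑ u, x u * y u - (∑ u, x u) * ∑ u, y u) := by
  simp only [sub_mul, mul_sub, sum_sub_distrib, sum_const, card_univ, nsmul_eq_mul, ← mul_sum,
    ← sum_mul]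
  ring

theorem hasDerivAt_dirichletEnergy_one (ha : ∀ i j, a i j = a j i) {θ : ι → ℝ → ℝ} {t : ℝ}
    (hθ : ∀ i, HasDerivAt (θ i) (∑ j, a i j * (θ j t - θ i t)) t) :
    HasDerivAt (fun s => dirichletEnergy 1 (θ · s))
      (-(2 * Fintype.card ι) * dirichletEnergy a (θ · t)) t := by
  set d : ι → ℝ := fun i => ∑ j, a i j * (θ j t - θ i t)
  have h : HasDerivAt (fun s => ∑ u, ∑ v, (θ u s - θ v s) ^ 2)
      (∑ u, ∑ v, 2 * ((θ u t - θ v t) * (d u - d v))) t := by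
    refine HasDerivAt.fun_sum fun u _ => HasDerivAt.fun_sum fun v _ => ?_
    exact (((hθ u).fun_sub (hθ v)).fun_pow 2).congr_deriv (by simp only [d]; ring)
  simp only [dirichletEnergy_one]
  convert h using 1
  simp only [← mul_sum]
  rw [sum_sum_sub_mul_sub, sum_sum_mul_sub_eq_zero ha]
  linear_combination (-2 * (Fintype.card ι : ℝ)) * two_mul_sum_mul_sum_mul_sub ha (θ · t)

theorem exists_pos_mul_dirichletEnergy_one_le (ha : ∀ i j, 0 ≤ a i j)
    (hconn : ∀ u v, ReflTransGen (fun i j => 0 < a i j) u v) :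
    ∃ κ > 0, ∀ x, κ * dirichletEnergy 1 x ≤ dirichletEnergy a x := by
  choose n hn using fun u v => (hconn u v).exists_dist_le_mul (E := ℝ)
  -- `0⁻¹ = 0`, so `A` bounds the inverse weight of every edge
  set A := ∑ i, ∑ j, (a i j)⁻¹
  have hA : ∀ i j, (a i j)⁻¹ ≤ A := fun i j =>
    (single_le_sum (f := fun j => (a i j)⁻¹) (fun k _ => inv_nonneg.2 (ha i k))
      (mem_univ j)).trans <|
      single_le_sum (f := fun i => ∑ j, (a i j)⁻¹)
        (fun k _ => sum_nonneg fun l _ => inv_nonneg.2 (ha k l)) (mem_univ i)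
  set K := ∑ u, ∑ v, (n u v : ℝ) ^ 2 * A
  have hK : 0 ≤ K := sum_nonneg fun u _ => sum_nonneg fun v _ =>
    mul_nonneg (sq_nonneg _) ((inv_nonneg.2 (ha u v)).trans (hA u v))
  refine ⟨(K + 1)⁻¹, by positivity, fun x => ?_⟩
  set E := dirichletEnergy a x
  have hE : 0 ≤ E := dirichletEnergy_nonneg ha x
  have hedge : ∀ i j, 0 < a i j → dist (x i) (x j) ≤ √(A * E) := fun i j hij =>
    Real.abs_le_sqrt <| calc
      (x i - x j) ^ 2 = (a i j)⁻¹ * (a i j * (x i - x j) ^ 2) := by field_simp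
      _ ≤ A * E := mul_le_mul (hA i j) (mul_sq_sub_le_dirichletEnergy ha x i j)
          (mul_nonneg hij.le (sq_nonneg _)) ((inv_nonneg.2 hij.le).trans (hA i j))
  have hpair : ∀ u v, (x u - x v) ^ 2 ≤ (n u v : ℝ) ^ 2 * A * E := fun u v => by
    have h := hn u v x _ hedge
    rw [Real.dist_eq] at h
    calc (x u - x v) ^ 2 = |x u - x v| ^ 2 := (sq_abs _).symm
      _ ≤ (n u v * √(A * E)) ^ 2 := pow_le_pow_left₀ (abs_nonneg _) h 2
      _ = (n u v : ℝ) ^ 2 * A * E := by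
        rw [mul_pow, Real.sq_sqrt (mul_nonneg ((inv_nonneg.2 (ha u u)).trans (hA u u)) hE)]
        ring
  have hV : dirichletEnergy 1 x ≤ K * E := by
    simp only [dirichletEnergy_one, K, sum_mul]
    exact sum_le_sum fun u _ => sum_le_sum fun v _ => hpair u v
  rw [inv_mul_le_iff₀ (by positivity)]
  nlinarith

theorem le_mul_exp_of_hasDerivAt_le {f f' : ℝ → ℝ} {k : ℝ}
    (hf : ∀ t, 0 ≤ t → HasDerivAt f (f' t) t) (hbound : ∀ t, 0 ≤ t → f' t ≤ -k * f t)
    {t : ℝ} (ht : 0 ≤ t) : f t ≤ f 0 * exp (-k * t) := by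
  have h := le_gronwallBound_of_liminf_deriv_right_le (f := f) (f' := f') (K := -k) (ε := 0)
    (fun x hx => (hf x hx.1).continuousAt.continuousWithinAt)
    (fun x hx r hr => (hf x hx.1).hasDerivWithinAt.liminf_right_slope_le hr)
    le_rfl (fun x hx => by simpa using hbound x hx.1) t ⟨ht, le_rfl⟩
  simpa [gronwallBound_ε0] using h

theorem exists_abs_sub_le_exp_of_consensus [Nonempty ι] (ha : ∀ i j, 0 ≤ a i j)
    (ha_symm : ∀ i j, a i j = a j i) (hconn : ∀ u v, ReflTransGen (fun i j => 0 < a i j) u v)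
    {θ : ι → ℝ → ℝ} (hθ : ∀ i, ∀ t : ℝ, 0 ≤ t → HasDerivAt (θ i) (∑ j, a i j * (θ j t - θ i t)) t) :
    ∃ c > (0 : ℝ), ∃ lam > (0 : ℝ), ∀ t : ℝ, 0 ≤ t →
      ∀ i j, |θ i t - θ j t| ≤ c * exp (-lam * t) := by
  obtain ⟨κ, hκ, hκE⟩ := exists_pos_mul_dirichletEnergy_one_le ha hconn
  set V : ℝ → ℝ := fun t => dirichletEnergy 1 (θ · t)
  set lam := Fintype.card ι * κ
  have hdecay : ∀ t, 0 ≤ t → V t ≤ V 0 * exp (-(2 * lam) * t) := fun t ht =>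
    le_mul_exp_of_hasDerivAt_le (fun s hs => hasDerivAt_dirichletEnergy_one ha_symm (hθ · s hs))
      (fun s _ => by nlinarith [hκE (θ · s), (Fintype.card_pos : 0 < Fintype.card ι)]) ht
  have hV0 : 0 ≤ V 0 := dirichletEnergy_nonneg (fun _ _ => zero_le_one) _
  refine ⟨√(V 0) + 1, by positivity, lam, by positivity, fun t ht i j => ?_⟩
  calc |θ i t - θ j t| ≤ √(V t) := Real.abs_le_sqrt (sq_sub_le_dirichletEnergy_one (θ · t) i j)
    _ ≤ √(V 0 * exp (-(2 * lam) * t)) := Real.sqrt_le_sqrt (hdecay t ht)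
    _ = √(V 0) * exp (-lam * t) := by
      rw [Real.sqrt_mul hV0, show -(2 * lam) * t = -lam * t + -lam * t by ring, exp_add,
        Real.sqrt_mul_self (exp_nonneg _)]
    _ ≤ (√(V 0) + 1) * exp (-lam * t) := by gcongr; linarith

end Consensus

theorem coupled_oscillators_sync_general
    (N : ℕ)
    (a : Fin N → Fin N → ℝ)
    (ha_nonneg : ∀ i j, 0 ≤ a i j)
    (ha_symm : ∀ i j, a i j = a j i)
    (hconn : ∀ u v : Fin N, Relation.ReflTransGen (fun i j => 0 < a i j) u v)
    (θ : Fin N → ℝ → ℝ)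
    (hdyn : ∀ i : Fin N, ∀ t : ℝ, 0 ≤ t →
      HasDerivAt (θ i) (∑ j, a i j * wrap (θ j t - θ i t)) t)
    (hinit : ∃ γ : ℝ, ∀ i, θ i 0 ∈ Set.Ioo γ (γ + π)) :
    (∀ i : Fin N, ∀ t : ℝ, 0 ≤ t →
        θ i t ∈ Set.Icc (⨅ j, θ j 0) (⨆ j, θ j 0)) ∧
    (∃ c > (0 : ℝ), ∃ lam > (0 : ℝ), ∀ t : ℝ, 0 ≤ t →
        ∀ i j : Fin N, |θ i t - θ j t| ≤ c * Real.exp (-lam * t)) := by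
  rcases isEmpty_or_nonempty (Fin N) with _ | _
  · exact ⟨fun i => isEmptyElim i, 1, one_pos, 1, one_pos, fun _ _ i => isEmptyElim i⟩
  obtain ⟨γ, hγ⟩ := hinit
  set m := ⨅ j, θ j 0
  set M := ⨆ j, θ j 0
  have hspread : M - m < π := by
    obtain ⟨i₀, hi₀⟩ := exists_eq_ciInf_of_finite (f := fun j => θ j 0)
    linarith [ciSup_le fun j => (hγ j).2.le, (hγ i₀).1, hi₀]
  have h0 : ∀ i, θ i 0 ∈ Icc m M := fun i =>
    ⟨ciInf_le (Finite.bddBelow_range _) i, le_ciSup (Finite.bddAbove_range fun j => θ j 0) i⟩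
  have hinv : ∀ i t, 0 ≤ t → θ i t ∈ Icc m M := fun i t ht =>
    mem_Icc_of_hasDerivAt_wrap ha_nonneg hdyn hspread h0 ht i
  refine ⟨hinv, exists_abs_sub_le_exp_of_consensus ha_nonneg ha_symm hconn fun i t ht => ?_⟩
  have hwrap : ∀ j, wrap (θ j t - θ i t) = θ j t - θ i t := fun j => wrap_eq_self_of_abs_lt <|
    (Real.dist_le_of_mem_Icc (hinv j t ht) (hinv i t ht)).trans_lt hspread
  simpa only [hwrap] using hdyn i t ht

/-- for the coupled oscillator dynamics on a connected undirected weighted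
graph, if all initial phases lie in an open semicircle then `[min θ(0), max θ(0)]` is
positively invariant and the phases synchronize exponentially. -/
theorem coupled_oscillators_sync
    (N : ℕ) (hN : 0 < N)
    (a : Fin N → Fin N → ℝ)
    (ha_nonneg : ∀ i j, 0 ≤ a i j)
    (ha_symm : ∀ i j, a i j = a j i)
    (hconn : ∀ u v : Fin N, Relation.ReflTransGen (fun i j => 0 < a i j) u v)
    (θ : Fin N → ℝ → ℝ)
    (hdyn : ∀ i : Fin N, ∀ t : ℝ, 0 ≤ t →
      HasDerivAt (θ i) (∑ j, a i j * wrap (θ j t - θ i t)) t)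
    (hinit : ∃ γ : ℝ, ∀ i, θ i 0 ∈ Set.Ioo γ (γ + π)) :
    (∀ i : Fin N, ∀ t : ℝ, 0 ≤ t →
        θ i t ∈ Set.Icc (⨅ j, θ j 0) (⨆ j, θ j 0)) ∧
    (∃ c > (0 : ℝ), ∃ lam > (0 : ℝ), ∀ t : ℝ, 0 ≤ t →
        ∀ i j : Fin N, |θ i t - θ j t| ≤ c * Real.exp (-lam * t)) :=
  coupled_oscillators_sync_general N a ha_nonneg ha_symm hconn θ hdyn hinit
end

section
/- Let C_1,…,C_N be 3×3 real special orthogonal matrices, and for each agent i and each k ∈ {1,2} let q_{i,k} : [0,∞) → ℝ³ be functions such that for each k there exists a limit q_k^∞ ∈ ℝ³ with q_{i,k}(t) → q_k^∞ as t → ∞ for every i, where q_1^∞ and q_2^∞ are linearly independent. Set z_{i,k}(t) = C_i q_{i,k}(t). For each i and each t at which z_{i,1}(t), z_{i,2}(t) are linearly independent, define b_{i,1}(t), b_{i,2}(t) as the normalized Gram–Schmidt orthonormalization of z_{i,1}(t), z_{i,2}(t), define b_{i,3}(t) = b_{i,1}(t) × b_{i,2}(t), and let B_i(t) be the 3×3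 matrix with columns b_{i,1}(t), b_{i,2}(t), b_{i,3}(t). Then B_i(t) is special orthogonal wherever it is defined, and there exists a single matrix X ∈ SO(3) (independent of i) such that B_i(t) → C_i X as t → ∞ for every i ∈ {1,…,N}; consequently B_i(t) − C_i C_j^T B_j(t) → 0 as t → ∞ for all i, j. -/
open Matrix Filter

/-- The Euclidean norm on `ℝ^n`. -/
noncomputable def euclNorm {n : Type*} [Fintype n] (v : n → ℝ) : ℝ :=
  Real.sqrt (∑ i, v i ^ 2)

/-- Normalized Gram–Schmidt orthonormalization of the sequence `v` in `ℝ^n`: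
`gramSchmidtN v k = v'ₖ / ‖v'ₖ‖` where `v'ₖ = vₖ − ∑_{l<k} ⟨vₖ, bₗ⟩ bₗ`. -/
noncomputable def gramSchmidtN {n : ℕ} (v : ℕ → Fin n → ℝ) : ℕ → Fin n → ℝ
  | k =>
    let u : Fin n → ℝ :=
      v k - ∑ l ∈ (Finset.range k).attach,
        ((v k) ⬝ᵥ gramSchmidtN v l.1) • gramSchmidtN v l.1
    (euclNorm u)⁻¹ • u
  decreasing_by all_goals exact Finset.mem_range.mp l.2

/-- The `3×3` matrix whose columns are `b₁, b₂, b₃`. -/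
def colMatrix (b1 b2 b3 : Fin 3 → ℝ) : Matrix (Fin 3) (Fin 3) ℝ :=
  Matrix.of fun r c => ![b1, b2, b3] c r

/-! The Gram–Schmidt frame `gsFrame v₁ v₂` (normalized `v₁`, normalized residual of `v₂`, and
their cross product) is special orthogonal whenever `v₁, v₂` are independent, depends continuously
on `(v₁, v₂)` near such a pair, and is equivariant under rotations:
`gsFrame (A v₁) (A v₂) = A * gsFrame v₁ v₂` for `A ∈ SO(3)`, because orthogonal maps preserve
inner products and rotations commute with the cross product. Hence
`B_i(t) = C_i * gsFrame (q_{i,1}(t)) (q_{i,2}(t)) → C_i X` with `X = gsFrame q₁^∞ q₂^∞`, and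
`C_i C_jᵀ B_j(t) → C_i C_jᵀ C_j X = C_i X` as well. -/

section EuclideanNorm

variable {n : Type*} [Fintype n]

noncomputable def euclNormalize (v : n → ℝ) : n → ℝ := (euclNorm v)⁻¹ • v

theorem euclNorm_eq_sqrt_dotProduct (v : n → ℝ) : euclNorm v = √(v ⬝ᵥ v) := by
  simp only [euclNorm, dotProduct, sq]

theorem euclNorm_ne_zero {v : n → ℝ} (hv : v ≠ 0) : euclNorm v ≠ 0 := by
  rw [euclNorm_eq_sqrt_dotProduct, Real.sqrt_ne_zero']
  simpa using dotProduct_self_star_pos_iff.mpr hv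

theorem continuous_euclNorm : Continuous (euclNorm : (n → ℝ) → ℝ) := by
  unfold euclNorm; fun_prop

theorem euclNormalize_dotProduct_self {v : n → ℝ} (hv : v ≠ 0) :
    euclNormalize v ⬝ᵥ euclNormalize v = 1 := by
  have hv2 : v ⬝ᵥ v = euclNorm v ^ 2 := by
    rw [euclNorm_eq_sqrt_dotProduct, Real.sq_sqrt (by simpa using dotProduct_self_star_nonneg v)]
  rw [euclNormalize, smul_dotProduct, dotProduct_smul, hv2, smul_eq_mul, smul_eq_mul]
  field_simp [euclNorm_ne_zero hv]

theorem Filter.Tendsto.euclNormalize {α : Type*} {l : Filter α} {f : α → n → ℝ} {v : n → ℝ}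
    (hf : Tendsto f l (nhds v)) (hv : v ≠ 0) :
    Tendsto (fun t => _root_.euclNormalize (f t)) l (nhds (_root_.euclNormalize v)) :=
  (((continuous_euclNorm.tendsto v).comp hf).inv₀ (euclNorm_ne_zero hv)).smul hf

variable [DecidableEq n]

theorem mulVec_dotProduct_mulVec {A : Matrix n n ℝ} (hA : Aᵀ * A = 1) (v w : n → ℝ) :
    (A *ᵥ v) ⬝ᵥ (A *ᵥ w) = v ⬝ᵥ w := by
  rw [dotProduct_mulVec, ← mulVec_transpose, mulVec_mulVec, hA, one_mulVec]

theorem euclNorm_mulVec {A : Matrix n n ℝ} (hA : Aᵀ * A = 1) (v : n → ℝ) :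
    euclNorm (A *ᵥ v) = euclNorm v := by
  rw [euclNorm_eq_sqrt_dotProduct, euclNorm_eq_sqrt_dotProduct, mulVec_dotProduct_mulVec hA]

theorem euclNormalize_mulVec {A : Matrix n n ℝ} (hA : Aᵀ * A = 1) (v : n → ℝ) :
    euclNormalize (A *ᵥ v) = A *ᵥ euclNormalize v := by
  rw [euclNormalize, euclNormalize, euclNorm_mulVec hA, mulVec_smul]

end EuclideanNorm

section GramSchmidt

variable {n : Type*} [Fintype n]

noncomputable def gsResidual (v₁ v₂ : n → ℝ) : n → ℝ :=
  v₂ - (v₂ ⬝ᵥ euclNormalize v₁) • euclNormalize v₁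

theorem euclNormalize_dotProduct_gsResidual {v₁ : n → ℝ} (hv₁ : v₁ ≠ 0) (v₂ : n → ℝ) :
    euclNormalize v₁ ⬝ᵥ gsResidual v₁ v₂ = 0 := by
  rw [gsResidual, dotProduct_sub, dotProduct_smul, euclNormalize_dotProduct_self hv₁,
    smul_eq_mul, mul_one, dotProduct_comm, sub_self]

theorem gsResidual_ne_zero {v : Fin 2 → n → ℝ} (hv : LinearIndependent ℝ v) :
    gsResidual (v 0) (v 1) ≠ 0 := by
  have hv' := linearIndependent_fin2.mp (hv.comp _ (Equiv.swap (0 : Fin 2) 1).injective)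
  simp only [Function.comp_apply, Equiv.swap_apply_left, Equiv.swap_apply_right] at hv'
  rw [gsResidual, euclNormalize, smul_smul, sub_ne_zero]
  exact (hv'.2 _).symm

theorem Filter.Tendsto.gsResidual {α : Type*} {l : Filter α} {f₁ f₂ : α → n → ℝ}
    {v₁ v₂ : n → ℝ} (h₁ : Tendsto f₁ l (nhds v₁)) (h₂ : Tendsto f₂ l (nhds v₂)) (hv₁ : v₁ ≠ 0) :
    Tendsto (fun t => _root_.gsResidual (f₁ t) (f₂ t)) l (nhds (_root_.gsResidual v₁ v₂)) := by
  have hn := h₁.euclNormalize hv₁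
  have hdot := ((continuous_fst.dotProduct continuous_snd).tendsto _).comp (h₂.prodMk_nhds hn)
  exact h₂.sub (hdot.smul hn)

variable [DecidableEq n]

theorem gsResidual_mulVec {A : Matrix n n ℝ} (hA : Aᵀ * A = 1) (v₁ v₂ : n → ℝ) :
    gsResidual (A *ᵥ v₁) (A *ᵥ v₂) = A *ᵥ gsResidual v₁ v₂ := by
  rw [gsResidual, gsResidual, euclNormalize_mulVec hA, mulVec_dotProduct_mulVec hA, mulVec_sub,
    mulVec_smul]

end GramSchmidt

theorem gramSchmidtN_zero {n : ℕ} (w : ℕ → Fin n → ℝ) :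
    gramSchmidtN w 0 = euclNormalize (w 0) := by
  rw [gramSchmidtN]
  simp [euclNormalize]

theorem gramSchmidtN_one {n : ℕ} (w : ℕ → Fin n → ℝ) :
    gramSchmidtN w 1 = euclNormalize (gsResidual (w 0) (w 1)) := by
  rw [gramSchmidtN, Finset.sum_attach (Finset.range 1)
    (fun l => (w 1 ⬝ᵥ gramSchmidtN w l) • gramSchmidtN w l)]
  simp only [Finset.range_one, Finset.sum_singleton, gramSchmidtN_zero]
  rfl

theorem mulVec_cross_mulVec {R : Type*} [CommRing R] (A : Matrix (Fin 3) (Fin 3) R)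
    (a b : Fin 3 → R) : (A *ᵥ a) ⨯₃ (A *ᵥ b) = (adjugate A)ᵀ *ᵥ (a ⨯₃ b) := by
  ext i
  fin_cases i <;>
    simp [adjugate_fin_three, cross_apply, mulVec, dotProduct, Fin.sum_univ_three] <;> ring

theorem adjugate_eq_transpose {R : Type*} [CommRing R] {n : Type*} [Fintype n] [DecidableEq n]
    {A : Matrix n n R} (hA : Aᵀ * A = 1) (hdet : A.det = 1) : adjugate A = Aᵀ :=
  calc adjugate A = Aᵀ * A * adjugate A := by rw [hA, Matrix.one_mul]
    _ = Aᵀ := by rw [Matrix.mul_assoc, mul_adjugate, hdet, one_smul, Matrix.mul_one]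

theorem mulVec_cross_mulVec_of_special_orthogonal {A : Matrix (Fin 3) (Fin 3) ℝ}
    (hA : Aᵀ * A = 1) (hdet : A.det = 1) (a b : Fin 3 → ℝ) :
    (A *ᵥ a) ⨯₃ (A *ᵥ b) = A *ᵥ (a ⨯₃ b) := by
  rw [mulVec_cross_mulVec, adjugate_eq_transpose hA hdet, transpose_transpose]

theorem Filter.Tendsto.crossProduct {α : Type*} {l : Filter α} {f g : α → Fin 3 → ℝ}
    {a b : Fin 3 → ℝ} (hf : Tendsto f l (nhds a)) (hg : Tendsto g l (nhds b)) :
    Tendsto (fun t => f t ⨯₃ g t) l (nhds (a ⨯₃ b)) := by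
  have hcont : Continuous fun p : (Fin 3 → ℝ) × (Fin 3 → ℝ) => p.1 ⨯₃ p.2 := by
    simp only [cross_apply]; fun_prop
  exact (hcont.tendsto _).comp (hf.prodMk_nhds hg)

theorem colMatrix_eq_transpose (a b c : Fin 3 → ℝ) : colMatrix a b c = (of ![a, b, c])ᵀ := rfl

theorem mul_colMatrix (A : Matrix (Fin 3) (Fin 3) ℝ) (a b c : Fin 3 → ℝ) :
    A * colMatrix a b c = colMatrix (A *ᵥ a) (A *ᵥ b) (A *ᵥ c) := by
  ext r k
  fin_cases k <;> simp [colMatrix, mul_apply, mulVec, dotProduct]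

theorem Filter.Tendsto.colMatrix {α : Type*} {l : Filter α} {f g h : α → Fin 3 → ℝ}
    {a b c : Fin 3 → ℝ} (hf : Tendsto f l (nhds a)) (hg : Tendsto g l (nhds b))
    (hh : Tendsto h l (nhds c)) :
    Tendsto (fun t => _root_.colMatrix (f t) (g t) (h t)) l (nhds (_root_.colMatrix a b c)) := by
  have hcont : Continuous fun p : (Fin 3 → ℝ) × (Fin 3 → ℝ) × (Fin 3 → ℝ) =>
      _root_.colMatrix p.1 p.2.1 p.2.2 := by
    unfold _root_.colMatrix; fun_prop
  exact (hcont.tendsto _).comp (hf.prodMk_nhds (hg.prodMk_nhds hh))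

theorem transpose_mul_colMatrix_apply (a b c : Fin 3 → ℝ) (i j : Fin 3) :
    ((colMatrix a b c)ᵀ * colMatrix a b c) i j = ![a, b, c] i ⬝ᵥ ![a, b, c] j := by
  simp [colMatrix, mul_apply, dotProduct]

theorem transpose_mul_self_colMatrix_cross {b₁ b₂ : Fin 3 → ℝ} (h₁₁ : b₁ ⬝ᵥ b₁ = 1)
    (h₂₂ : b₂ ⬝ᵥ b₂ = 1) (h₁₂ : b₁ ⬝ᵥ b₂ = 0) :
    (colMatrix b₁ b₂ (b₁ ⨯₃ b₂))ᵀ * colMatrix b₁ b₂ (b₁ ⨯₃ b₂) = 1 := by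
  ext i j
  rw [transpose_mul_colMatrix_apply]
  fin_cases i <;> fin_cases j <;>
    simp [h₁₁, h₂₂, h₁₂, dotProduct_comm b₂ b₁, dot_self_cross, dot_cross_self, cross_dot_cross,
      dotProduct_comm (b₁ ⨯₃ b₂)]

theorem det_colMatrix_cross (b₁ b₂ : Fin 3 → ℝ) :
    (colMatrix b₁ b₂ (b₁ ⨯₃ b₂)).det = (b₁ ⨯₃ b₂) ⬝ᵥ (b₁ ⨯₃ b₂) := by
  rw [colMatrix_eq_transpose, det_transpose, ← triple_product_permutation,
    ← triple_product_permutation, triple_product_eq_det]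
  rfl

noncomputable def gsFrame (v₁ v₂ : Fin 3 → ℝ) : Matrix (Fin 3) (Fin 3) ℝ :=
  colMatrix (euclNormalize v₁) (euclNormalize (gsResidual v₁ v₂))
    (euclNormalize v₁ ⨯₃ euclNormalize (gsResidual v₁ v₂))

theorem gsFrame_special_orthogonal {v : Fin 2 → Fin 3 → ℝ} (hv : LinearIndependent ℝ v) :
    (gsFrame (v 0) (v 1))ᵀ * gsFrame (v 0) (v 1) = 1 ∧ (gsFrame (v 0) (v 1)).det = 1 := by
  have h₀ : v 0 ≠ 0 := hv.ne_zero 0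
  have h₁₁ := euclNormalize_dotProduct_self h₀
  have h₂₂ := euclNormalize_dotProduct_self (gsResidual_ne_zero hv)
  have h₁₂ : euclNormalize (v 0) ⬝ᵥ euclNormalize (gsResidual (v 0) (v 1)) = 0 := by
    rw [dotProduct_comm, euclNormalize, smul_dotProduct, dotProduct_comm,
      euclNormalize_dotProduct_gsResidual h₀, smul_zero]
  refine ⟨transpose_mul_self_colMatrix_cross h₁₁ h₂₂ h₁₂, ?_⟩
  rw [gsFrame, det_colMatrix_cross, cross_dot_cross, h₁₁, h₂₂, h₁₂, dotProduct_comm, h₁₂]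
  ring

theorem gsFrame_mulVec {A : Matrix (Fin 3) (Fin 3) ℝ} (hA : Aᵀ * A = 1) (hdet : A.det = 1)
    (v₁ v₂ : Fin 3 → ℝ) : gsFrame (A *ᵥ v₁) (A *ᵥ v₂) = A * gsFrame v₁ v₂ := by
  rw [gsFrame, gsFrame, gsResidual_mulVec hA, euclNormalize_mulVec hA, euclNormalize_mulVec hA,
    mulVec_cross_mulVec_of_special_orthogonal hA hdet, mul_colMatrix]

theorem Filter.Tendsto.gsFrame {α : Type*} {l : Filter α} {f₁ f₂ : α → Fin 3 → ℝ}
    {v₁ v₂ : Fin 3 → ℝ} (h₁ : Tendsto f₁ l (nhds v₁)) (h₂ : Tendsto f₂ l (nhds v₂))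
    (hv₁ : v₁ ≠ 0) (hu : _root_.gsResidual v₁ v₂ ≠ 0) :
    Tendsto (fun t => _root_.gsFrame (f₁ t) (f₂ t)) l (nhds (_root_.gsFrame v₁ v₂)) := by
  have hb₁ := h₁.euclNormalize hv₁
  have hb₂ := (h₁.gsResidual h₂ hv₁).euclNormalize hu
  exact hb₁.colMatrix hb₂ (hb₁.crossProduct hb₂)

/-- with `z_{i,k}(t) = C_i q_{i,k}(t)` where `q_{i,k}(t) → q_k^∞` (the limits
being linearly independent), the matrices `B_i(t)` built from Gram–Schmidt of
`z_{i,1}(t), z_{i,2}(t)` together with their cross product are special orthogonal wherever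
defined, converge to `C_i X` for a single `X ∈ SO(3)`, and hence
`B_i(t) − C_i C_jᵀ B_j(t) → 0`. -/
theorem orientation_estimation_convergence
    (N : ℕ)
    (C : Fin N → Matrix (Fin 3) (Fin 3) ℝ)
    (hC : ∀ i, (C i)ᵀ * C i = 1) (hdet : ∀ i, (C i).det = 1)
    (q : Fin N → Fin 2 → ℝ → Fin 3 → ℝ)
    (qinf : Fin 2 → Fin 3 → ℝ)
    (hlim : ∀ i k, Tendsto (fun t => q i k t) atTop (nhds (qinf k)))
    (hindep : LinearIndependent ℝ qinf)
    (z : Fin N → Fin 2 → ℝ → Fin 3 → ℝ)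
    (hz : ∀ i k t, z i k t = (C i).mulVec (q i k t))
    (zseq : Fin N → ℝ → ℕ → Fin 3 → ℝ)
    (hzseq : ∀ i t l, zseq i t l = if h : l < 2 then z i ⟨l, h⟩ t else 0)
    (B : Fin N → ℝ → Matrix (Fin 3) (Fin 3) ℝ)
    (hB : ∀ i t, B i t =
      colMatrix (gramSchmidtN (zseq i t) 0) (gramSchmidtN (zseq i t) 1)
        ((gramSchmidtN (zseq i t) 0) ⨯₃ (gramSchmidtN (zseq i t) 1))) :
    (∀ i t, LinearIndependent ℝ (fun k : Fin 2 => z i k t) →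
        (B i t)ᵀ * B i t = 1 ∧ (B i t).det = 1) ∧
    (∃ X : Matrix (Fin 3) (Fin 3) ℝ, Xᵀ * X = 1 ∧ X.det = 1 ∧
        ∀ i, Tendsto (fun t => B i t) atTop (nhds (C i * X))) ∧
    (∀ i j, Tendsto (fun t => B i t - C i * (C j)ᵀ * B j t) atTop (nhds 0)) := by
  have hBz : ∀ i t, B i t = gsFrame (z i 0 t) (z i 1 t) := by
    intro i t
    rw [hB, gramSchmidtN_zero, gramSchmidtN_one, hzseq, hzseq]
    rfl
  have hBq : ∀ i t, B i t = C i * gsFrame (q i 0 t) (q i 1 t) := by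
    intro i t
    rw [hBz, hz, hz, gsFrame_mulVec (hC i) (hdet i)]
  set X := gsFrame (qinf 0) (qinf 1)
  have hBX : ∀ i, Tendsto (fun t => B i t) atTop (nhds (C i * X)) := by
    intro i
    simp only [hBq]
    exact ((hlim i 0).gsFrame (hlim i 1) (hindep.ne_zero 0) (gsResidual_ne_zero hindep)).const_mul _
  refine ⟨fun i t hzi => hBz i t ▸ gsFrame_special_orthogonal (v := fun k => z i k t) hzi,
    ⟨X, (gsFrame_special_orthogonal hindep).1, (gsFrame_special_orthogonal hindep).2, hBX⟩,
    fun i j => ?_⟩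
  have hBji : Tendsto (fun t => C i * (C j)ᵀ * B j t) atTop (nhds (C i * X)) := by
    have hCX : C i * (C j)ᵀ * (C j * X) = C i * X := by
      rw [Matrix.mul_assoc, ← Matrix.mul_assoc (C j)ᵀ, hC j, Matrix.one_mul]
    simpa only [hCX] using (hBX j).const_mul (C i * (C j)ᵀ)
  simpa using (hBX i).sub hBji
end
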